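/- arXiv:2603.04629 — 3 statements merged into one kernel-verified Lean document; each statement's English description precedes it below -/
import Mathlib

section
/- Let $s=\{s_n\}_{n=1}^\infty\subset(0,1]$ be any sequence, and let $\widetilde{\varphi_s}:[0,1]\to[0,\infty)$ be a concave, non-decreasing function vanishing only at the origin with $\varphi_s\le\widetilde{\varphi_s}\le 2\varphi_s$ on $[0,1]$ (e.g. the least concave majorant of the quasi-concave function $\varphi_s$). Then $\Lambda_{\widetilde{\varphi_s}}$ embeds continuously into $QA_{\varphi,\psi}$: there exists a constant $C>0$ such that $\|f\|_{\varphi,\psi}\le C\,\|f\|_{\Lambda_{\widetilde{\varphi_s}}}$ for every $f\in\Lambda_{\widetilde{\varphi_s}}$. -/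
open MeasureTheory ENNReal Set Filter Topology

noncomputable section

/-- Lebesgue measure restricted to the interval `[0,1]`. -/
def μ01 : Measure ℝ := volume.restrict (Set.Icc 0 1)

/-- `φ : [0,1] → [0,∞)` is concave, non-decreasing, and vanishes only at the origin. -/
structure IsPhi (φ : ℝ → ℝ) : Prop where
  concave : ConcaveOn ℝ (Set.Icc 0 1) φ
  mono : MonotoneOn φ (Set.Icc 0 1)
  zero : φ 0 = 0
  pos : ∀ t : ℝ, 0 < t → t ≤ 1 → 0 < φ t

/-- `ψ : [0,∞) → [0,∞)` is concave, non-decreasing, and vanishes only at the origin. -/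
structure IsPsi (ψ : ℝ → ℝ) : Prop where
  concave : ConcaveOn ℝ (Set.Ici 0) ψ
  mono : MonotoneOn ψ (Set.Ici 0)
  zero : ψ 0 = 0
  pos : ∀ t : ℝ, 0 < t → 0 < ψ t

/-- A sequence `g` of nonnegative `L^∞` functions with `|f| ≤ ∑ₙ gₙ` a.e. -/
def Admissible (f : ℝ → ℝ) (g : ℕ → ℝ → ℝ) : Prop :=
  (∀ n, AEMeasurable (g n) μ01) ∧
  (∀ n, eLpNorm (g n) ⊤ μ01 < ⊤) ∧
  (∀ n x, 0 ≤ g n x) ∧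
  (∀ᵐ x ∂μ01, ENNReal.ofReal |f x| ≤ ∑' n : ℕ, ENNReal.ofReal (g n x))

/-- The cost `∑ₙ ψ(n) ‖gₙ‖_∞ φ(‖gₙ‖₁/‖gₙ‖_∞)` of a decomposition (index shifted by 1;
`0/0 = 0` by the `ℝ≥0∞` division convention, and `φ 0 = 0`). -/
def seqCost (φ ψ : ℝ → ℝ) (g : ℕ → ℝ → ℝ) : ℝ≥0∞ :=
  ∑' n : ℕ, ENNReal.ofReal
    (ψ ((n : ℝ) + 1) * (eLpNorm (g n) ⊤ μ01).toReal *
      φ ((eLpNorm (g n) 1 μ01 / eLpNorm (g n) ⊤ μ01).toReal))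

/-- The quasi-norm `‖f‖_{φ,ψ}` (equal to `∞` when no admissible decomposition exists). -/
def QANorm (φ ψ : ℝ → ℝ) (f : ℝ → ℝ) : ℝ≥0∞ :=
  ⨅ (g : ℕ → ℝ → ℝ) (_ : Admissible f g), seqCost φ ψ g

/-- Membership in the space `QA_{φ,ψ}`. -/
def MemQA (φ ψ : ℝ → ℝ) (f : ℝ → ℝ) : Prop :=
  AEMeasurable f μ01 ∧ QANorm φ ψ f < ⊤

/-- The decreasing rearrangement `f*` of `f` on `[0,1]`. -/
def decRearr (f : ℝ → ℝ) (t : ℝ) : ℝ :=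
  sInf {s : ℝ | 0 ≤ s ∧ μ01 {x | s < |f x|} ≤ ENNReal.ofReal t}

/-- The limit `ζ(0⁺)` of a non-decreasing function `ζ` on `[0,1]`. -/
def limZero (ζ : ℝ → ℝ) : ℝ := sInf (ζ '' Set.Ioc 0 1)

/-- The Lorentz norm `‖f‖_{Λ_ζ} = ∫₀¹ f* dζ = ‖f‖_∞ ζ(0⁺) + ∫₀¹ f*(s) ζ'(s) ds`
(for `ζ` concave the derivative exists a.e. and `ζ` is absolutely continuous on `(0,1]`). -/
def lorentzNorm (ζ : ℝ → ℝ) (f : ℝ → ℝ) : ℝ≥0∞ :=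
  eLpNorm f ⊤ μ01 * ENNReal.ofReal (limZero ζ) +
    ∫⁻ s in Set.Ioc (0:ℝ) 1, ENNReal.ofReal (decRearr f s * deriv ζ s)

/-- Membership in the Lorentz space `Λ_ζ`. -/
def MemLorentz (ζ : ℝ → ℝ) (f : ℝ → ℝ) : Prop :=
  AEMeasurable f μ01 ∧ lorentzNorm ζ f < ⊤

/-- The quasi-concave function `φ_s(t) = inf_n max{sₙ,t} (φ(sₙ)/sₙ) ψ(n)` (index shifted by 1). -/
def phiSeq (φ ψ : ℝ → ℝ) (s : ℕ → ℝ) (t : ℝ) : ℝ :=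
  if t = 0 then 0 else ⨅ n : ℕ, max (s n) t * (φ (s n) / s n) * ψ ((n : ℝ) + 1)

/-- The function `τ(t) = φ(t) ψ(logbar(φ(t)/t))` with `logbar t = 1 + log⁺ t`. -/
def tauF (φ ψ : ℝ → ℝ) (t : ℝ) : ℝ :=
  if t = 0 then 0 else φ t * ψ (1 + max (Real.log (φ t / t)) 0)

/-!
Write `τ_k = min(1, 2^{1-k})` and cut `|f|` into the layers `min(|f|, a_{k+1}) - min(|f|, a_k)`,
where `a_0 = 0` and `a_{k+1} = f*(2^{-k})`: the `k`-th layer has height `h_k = a_{k+1} - a_k` and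
lives on `{|f| > a_k}`, a set of measure at most `τ_k`. For each layer choose an index `ν k` with
`φ(s_ν)/s_ν · ψ(ν) · max(s_ν, τ_k) < 2 φ̃_s(τ_k)`, and let the `n`-th piece of the decomposition
be the sum of the layers with `ν k = n`. Concavity of `φ` gives
`‖g‖_∞ φ(‖g‖₁/‖g‖_∞) ≤ φ(σ)/σ · (σ‖g‖_∞ + ‖g‖₁)` for every `σ`; with `σ = s_n` the cost of the
`n`-th piece is at most `∑_{ν k = n} 4 h_k φ̃_s(τ_k)`. Summation by parts and the slope bound
`φ̃_s' ≥ (φ̃_s(2^{-j}) - φ̃_s(2^{-j-1}))/2^{-j}` on `(2^{-j-2}, 2^{-j-1}]` bound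
`∑_k h_k φ̃_s(τ_k)` by `4 ‖f‖_{Λ_{φ̃_s}}`.
-/

instance : IsProbabilityMeasure μ01 :=
  ⟨by rw [μ01, Measure.restrict_apply_univ, Real.volume_Icc]; norm_num⟩

def dyadic (k : ℕ) : ℝ := (2 : ℝ)⁻¹ ^ k

lemma dyadic_pos (k : ℕ) : 0 < dyadic k := by unfold dyadic; positivity

lemma dyadic_le_one (k : ℕ) : dyadic k ≤ 1 := pow_le_one₀ (by norm_num) (by norm_num)

lemma dyadic_mem_Ioc (k : ℕ) : dyadic k ∈ Ioc (0 : ℝ) 1 := ⟨dyadic_pos k, dyadic_le_one k⟩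

lemma dyadic_antitone : Antitone dyadic := fun _ _ h =>
  pow_le_pow_of_le_one (by norm_num) (by norm_num) h

lemma dyadic_succ (k : ℕ) : dyadic (k + 1) = dyadic k / 2 := by
  simp only [dyadic, pow_succ]; ring

lemma tendsto_dyadic_atTop : Tendsto dyadic atTop (𝓝 0) :=
  tendsto_pow_atTop_nhds_zero_of_lt_one (by norm_num) (by norm_num)

def dyadicDrop (φ : ℝ → ℝ) (j : ℕ) : ℝ := φ (dyadic j) - φ (dyadic (j + 1))

section DecRearr

variable {f : ℝ → ℝ}

lemma decRearr_nonneg (f : ℝ → ℝ) (t : ℝ) : 0 ≤ decRearr f t :=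
  Real.sInf_nonneg fun _ hb => hb.1

lemma decRearr_le_of_measure_le {t b : ℝ} (hb : 0 ≤ b)
    (h : μ01 {x | b < |f x|} ≤ ENNReal.ofReal t) : decRearr f t ≤ b :=
  csInf_le ⟨0, fun _ hb => hb.1⟩ ⟨hb, h⟩

lemma exists_measure_lt_abs_le (hf : Measurable f) {t : ℝ} (ht : 0 < t) :
    ∃ b : ℝ, 0 ≤ b ∧ μ01 {x | b < |f x|} ≤ ENNReal.ofReal t := by
  have hempty : (⋂ n : ℕ, {x : ℝ | (n : ℝ) < |f x|}) = ∅ :=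
    eq_empty_iff_forall_notMem.mpr fun x hx =>
      let ⟨n, hn⟩ := exists_nat_ge |f x|
      (mem_iInter.mp hx n).not_ge hn
  have hlim : Tendsto (fun n : ℕ => μ01 {x | (n : ℝ) < |f x|}) atTop (𝓝 0) := by
    rw [← measure_empty (μ := μ01), ← hempty]
    exact tendsto_measure_iInter_atTop
      (fun n => (measurableSet_lt measurable_const hf.abs).nullMeasurableSet)
      (fun m n hmn x (hx : (n : ℝ) < |f x|) => show (m : ℝ) < |f x| from
        (Nat.cast_le.mpr hmn).trans_lt hx)
      ⟨0, measure_ne_top _ _⟩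
  obtain ⟨n, hn⟩ := (hlim.eventually_lt_const (ENNReal.ofReal_pos.mpr ht)).exists
  exact ⟨n, n.cast_nonneg, hn.le⟩

lemma decRearr_anti (hf : Measurable f) {t t' : ℝ} (ht : 0 < t) (h : t ≤ t') :
    decRearr f t' ≤ decRearr f t :=
  csInf_le_csInf ⟨0, fun _ hb => hb.1⟩ (exists_measure_lt_abs_le hf ht)
    fun _ hb => ⟨hb.1, hb.2.trans (ENNReal.ofReal_le_ofReal h)⟩

lemma measure_decRearr_lt_abs_le (hf : Measurable f) {t : ℝ} (ht : 0 < t) :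
    μ01 {x | decRearr f t < |f x|} ≤ ENNReal.ofReal t := by
  set c := decRearr f t
  have hunion : {x | c < |f x|} = ⋃ m : ℕ, {x | c + ((m : ℝ) + 1)⁻¹ < |f x|} := by
    ext x
    simp only [mem_ofPred_eq, mem_iUnion]
    constructor
    · intro hx
      obtain ⟨m, hm⟩ := exists_nat_one_div_lt (sub_pos.mpr hx)
      exact ⟨m, by rw [one_div] at hm; linarith⟩
    · rintro ⟨m, hm⟩
      have : (0 : ℝ) < ((m : ℝ) + 1)⁻¹ := by positivity
      linarith
  have hmono : Monotone fun m : ℕ => {x | c + ((m : ℝ) + 1)⁻¹ < |f x|} := by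
    intro m m' hmm' x (hx : c + _ < _)
    have : ((m' : ℝ) + 1)⁻¹ ≤ ((m : ℝ) + 1)⁻¹ := by gcongr
    show c + ((m' : ℝ) + 1)⁻¹ < |f x|
    linarith
  rw [hunion, hmono.measure_iUnion]
  refine iSup_le fun m => ?_
  obtain ⟨b, hb, hbc⟩ := exists_lt_of_csInf_lt (exists_measure_lt_abs_le hf ht)
    (lt_add_of_pos_right c (by positivity : (0 : ℝ) < ((m : ℝ) + 1)⁻¹))
  exact (measure_mono fun x (hx : _ < _) => hbc.trans hx).trans hb.2

lemma decRearr_le_toReal_eLpNorm_top (hf : eLpNorm f ⊤ μ01 ≠ ⊤) (t : ℝ) :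
    decRearr f t ≤ (eLpNorm f ⊤ μ01).toReal := by
  refine decRearr_le_of_measure_le ENNReal.toReal_nonneg (le_of_eq_of_le ?_ zero_le)
  refine measure_eq_zero_iff_ae_notMem.mpr ?_
  filter_upwards [ae_le_eLpNormEssSup (f := f) (μ := μ01)] with x hx
  show ¬ _ < _
  rw [not_lt, ← Real.norm_eq_abs, ← toReal_enorm]
  exact ENNReal.toReal_mono hf (by rwa [eLpNorm_exponent_top])

lemma decRearr_congr_ae {g : ℝ → ℝ} (h : f =ᵐ[μ01] g) : decRearr f = decRearr g := by
  have hmeas : ∀ b : ℝ, μ01 {x | b < |f x|} = μ01 {x | b < |g x|} := fun b =>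
    measure_congr (h.mono fun x hx => show (b < |f x|) = (b < |g x|) by rw [hx])
  funext t
  simp only [decRearr, hmeas]

end DecRearr

namespace IsPhi

variable {φ : ℝ → ℝ}

lemma nonneg (hφ : IsPhi φ) {t : ℝ} (h0 : 0 ≤ t) (h1 : t ≤ 1) : 0 ≤ φ t := by
  rcases h0.eq_or_lt with rfl | h0
  · exact hφ.zero.ge
  · exact (hφ.pos t h0 h1).le

lemma le_div_mul_add (hφ : IsPhi φ) {σ r : ℝ} (hσ : σ ∈ Ioc (0 : ℝ) 1) (hr : r ∈ Icc (0 : ℝ) 1) :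
    φ r ≤ φ σ / σ * (σ + r) := by
  have hslope : 0 ≤ φ σ / σ := div_nonneg (hφ.nonneg hσ.1.le hσ.2) hσ.1.le
  have hexpand : φ σ / σ * (σ + r) = φ σ + φ σ / σ * r := by field_simp [hσ.1.ne']
  rw [hexpand]
  rcases le_or_gt r σ with hrσ | hσr
  · nlinarith [hφ.mono hr ⟨hσ.1.le, hσ.2⟩ hrσ, hr.1]
  · -- slopes of a concave function decrease: `(φ r - φ σ)/(r - σ) ≤ (φ σ - φ 0)/σ`
    have h := hφ.concave.slope_anti_adjacent (x := 0) ⟨le_rfl, zero_le_one⟩ hr hσ.1 hσr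
    rw [hφ.zero, sub_zero, sub_zero, div_le_iff₀ (sub_pos.mpr hσr)] at h
    nlinarith [hσ.1]

lemma ae_differentiableAt (hφ : IsPhi φ) :
    ∀ᵐ t, t ∈ Ioo (0 : ℝ) 1 → DifferentiableAt ℝ φ t := by
  filter_upwards [hφ.mono.ae_differentiableWithinAt_of_mem] with t ht ht01
  exact (ht (Ioo_subset_Icc_self ht01)).differentiableAt (Icc_mem_nhds ht01.1 ht01.2)

lemma limZero_nonneg (hφ : IsPhi φ) : 0 ≤ limZero φ :=
  Real.sInf_nonneg (by rintro _ ⟨t, ht, rfl⟩; exact (hφ.pos t ht.1 ht.2).le)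

lemma limZero_le (hφ : IsPhi φ) {t : ℝ} (ht : t ∈ Ioc (0 : ℝ) 1) : limZero φ ≤ φ t :=
  csInf_le ⟨0, by rintro _ ⟨t, ht, rfl⟩; exact (hφ.pos t ht.1 ht.2).le⟩ ⟨t, ht, rfl⟩

lemma antitone_comp_dyadic (hφ : IsPhi φ) : Antitone fun k => φ (dyadic k) := fun _ _ h =>
  hφ.mono ⟨(dyadic_pos _).le, dyadic_le_one _⟩ ⟨(dyadic_pos _).le, dyadic_le_one _⟩
    (dyadic_antitone h)

lemma tendsto_limZero (hφ : IsPhi φ) :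
    Tendsto (fun k => φ (dyadic k)) atTop (𝓝 (limZero φ)) := by
  have hbdd : BddBelow (range fun k => φ (dyadic k)) :=
    ⟨0, by rintro _ ⟨k, rfl⟩; exact (hφ.pos _ (dyadic_pos k) (dyadic_le_one k)).le⟩
  convert tendsto_atTop_ciInf hφ.antitone_comp_dyadic hbdd using 2
  refine le_antisymm (le_ciInf fun k => hφ.limZero_le (dyadic_mem_Ioc k)) ?_
  refine le_csInf ⟨φ 1, 1, ⟨zero_lt_one, le_rfl⟩, rfl⟩ ?_
  rintro _ ⟨t, ht, rfl⟩
  obtain ⟨k, hk⟩ := exists_pow_lt_of_lt_one ht.1 (by norm_num : (2 : ℝ)⁻¹ < 1)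
  exact ciInf_le_of_le hbdd k (hφ.mono ⟨(dyadic_pos k).le, dyadic_le_one k⟩ ⟨ht.1.le, ht.2⟩ hk.le)

lemma dyadicDrop_nonneg (hφ : IsPhi φ) (j : ℕ) : 0 ≤ dyadicDrop φ j :=
  sub_nonneg.mpr (hφ.antitone_comp_dyadic j.le_succ)

lemma hasSum_dyadicDrop (hφ : IsPhi φ) (c : ℕ) :
    HasSum (fun j => if c ≤ j then dyadicDrop φ j else 0) (φ (dyadic c) - limZero φ) := by
  have hpartial : ∀ K, ∑ j ∈ Finset.range K, (if c ≤ j then dyadicDrop φ j else 0) =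
      φ (dyadic c) - φ (dyadic (max c K)) := by
    intro K
    induction K with
    | zero => simp
    | succ K ih =>
      rw [Finset.sum_range_succ, ih]
      rcases le_or_gt c K with h | h
      · rw [if_pos h, max_eq_right h, max_eq_right (h.trans K.le_succ), dyadicDrop]
        ring
      · rw [if_neg (by omega), max_eq_left h.le, max_eq_left (by omega), add_zero]
  rw [hasSum_iff_tendsto_nat_of_nonneg
    (fun j => by split_ifs <;> simp [hφ.dyadicDrop_nonneg])]
  simp only [hpartial]
  exact (hφ.tendsto_limZero.comp
    (tendsto_atTop_mono (le_max_right c) tendsto_id)).const_sub _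

lemma ofReal_eq_limZero_add_tsum (hφ : IsPhi φ) (c : ℕ) :
    ENNReal.ofReal (φ (dyadic c)) = ENNReal.ofReal (limZero φ) +
      ∑' j, if c ≤ j then ENNReal.ofReal (dyadicDrop φ j) else 0 := by
  have hsum := hφ.hasSum_dyadicDrop c
  have hnonneg : ∀ j, 0 ≤ if c ≤ j then dyadicDrop φ j else 0 := fun j => by
    split_ifs <;> simp [hφ.dyadicDrop_nonneg]
  rw [← add_sub_cancel (limZero φ) (φ (dyadic c)), ENNReal.ofReal_add hφ.limZero_nonneg
    (sub_nonneg.mpr (hφ.limZero_le (dyadic_mem_Ioc c))), ← hsum.tsum_eq,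
    ENNReal.ofReal_tsum_of_nonneg hnonneg hsum.summable]
  congr 1
  exact tsum_congr fun j => by split_ifs <;> simp

/-- `φ'(t)` dominates the secant slope of `φ` over `[t, 2⁻ʲ]`. -/
lemma dyadicDrop_div_le_deriv (hφ : IsPhi φ) {j : ℕ} {t : ℝ} (ht : t ∈ Ioc 0 (dyadic (j + 1)))
    (hdiff : DifferentiableAt ℝ φ t) : dyadicDrop φ j / dyadic j ≤ deriv φ t := by
  have hj : dyadic (j + 1) < dyadic j := by rw [dyadic_succ]; linarith [dyadic_pos j]
  have htj : t < dyadic j := ht.2.trans_lt hj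
  have hφt : φ t ≤ φ (dyadic (j + 1)) :=
    hφ.mono ⟨ht.1.le, ht.2.trans (dyadic_le_one _)⟩ ⟨(dyadic_pos _).le, dyadic_le_one _⟩ ht.2
  have hdrop : dyadicDrop φ j ≤ φ (dyadic j) - φ t := by unfold dyadicDrop; linarith
  calc dyadicDrop φ j / dyadic j ≤ slope φ t (dyadic j) := by
        rw [slope_def_field]
        exact div_le_div₀ ((hφ.dyadicDrop_nonneg j).trans hdrop) hdrop (sub_pos.mpr htj)
          (by linarith [ht.1])
    _ ≤ deriv φ t := hφ.concave.slope_le_deriv ⟨ht.1.le, htj.le.trans (dyadic_le_one j)⟩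
        ⟨(dyadic_pos j).le, dyadic_le_one j⟩ htj hdiff

end IsPhi

def level (f : ℝ → ℝ) : ℕ → ℝ
  | 0 => 0
  | k + 1 => decRearr f (dyadic k)

def layer (f : ℝ → ℝ) (k : ℕ) (x : ℝ) : ℝ := min |f x| (level f (k + 1)) - min |f x| (level f k)

def layerHeight (f : ℝ → ℝ) (k : ℕ) : ℝ := level f (k + 1) - level f k

section Layers

variable {f : ℝ → ℝ}

lemma level_monotone (hf : Measurable f) : Monotone (level f) := by
  refine monotone_nat_of_le_succ fun k => ?_
  cases k with
  | zero => exact decRearr_nonneg f _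
  | succ k => exact decRearr_anti hf (dyadic_pos _) (dyadic_antitone k.le_succ)

lemma level_le_toReal_eLpNorm_top (hf : eLpNorm f ⊤ μ01 ≠ ⊤) (k : ℕ) :
    level f k ≤ (eLpNorm f ⊤ μ01).toReal := by
  cases k with
  | zero => exact ENNReal.toReal_nonneg
  | succ k => exact decRearr_le_toReal_eLpNorm_top hf _

lemma layerHeight_nonneg (hf : Measurable f) (k : ℕ) : 0 ≤ layerHeight f k :=
  sub_nonneg.mpr (level_monotone hf k.le_succ)

lemma layer_nonneg (hf : Measurable f) (k : ℕ) (x : ℝ) : 0 ≤ layer f k x :=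
  sub_nonneg.mpr (min_le_min_left _ (level_monotone hf k.le_succ))

lemma layer_le_layerHeight (hf : Measurable f) (k : ℕ) (x : ℝ) : layer f k x ≤ layerHeight f k := by
  have := level_monotone hf k.le_succ
  unfold layer layerHeight
  rcases le_total |f x| (level f k) with h | h
  · rw [min_eq_left h, min_eq_left (h.trans this)]; linarith
  · rw [min_eq_right h]; linarith [min_le_right |f x| (level f (k + 1))]

lemma layer_eq_zero_of_abs_le (hf : Measurable f) {k : ℕ} {x : ℝ} (h : |f x| ≤ level f k) :
    layer f k x = 0 := by
  rw [layer, min_eq_left h, min_eq_left (h.trans (level_monotone hf k.le_succ)), sub_self]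

lemma measurable_layer (hf : Measurable f) (k : ℕ) : Measurable (layer f k) :=
  (hf.abs.min measurable_const).sub (hf.abs.min measurable_const)

lemma sum_range_layer (f : ℝ → ℝ) (x : ℝ) (K : ℕ) :
    ∑ k ∈ Finset.range K, layer f k x = min |f x| (level f K) := by
  simp only [layer]
  rw [Finset.sum_range_sub (fun k => min |f x| (level f k)), level,
    min_eq_right (abs_nonneg (f x)), sub_zero]

lemma sum_range_layerHeight (f : ℝ → ℝ) (K : ℕ) :
    ∑ k ∈ Finset.range K, layerHeight f k = level f K := by
  simp only [layerHeight]
  rw [Finset.sum_range_sub (level f), level, sub_zero]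

/-- For `k = 0` the truncated subtraction `k - 1 = 0` makes this the trivial bound `1`. -/
lemma measure_level_lt_abs_le (hf : Measurable f) (k : ℕ) :
    μ01 {x | level f k < |f x|} ≤ ENNReal.ofReal (dyadic (k - 1)) := by
  cases k with
  | zero => simpa [dyadic] using prob_le_one
  | succ k => exact measure_decRearr_lt_abs_le hf (dyadic_pos k)

lemma lintegral_layer_le (hf : Measurable f) (k : ℕ) :
    ∫⁻ x, ENNReal.ofReal (layer f k x) ∂μ01 ≤
      ENNReal.ofReal (layerHeight f k * dyadic (k - 1)) := by
  have hmeas : MeasurableSet {x | level f k < |f x|} := measurableSet_lt measurable_const hf.abs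
  calc ∫⁻ x, ENNReal.ofReal (layer f k x) ∂μ01
      ≤ ∫⁻ x, {x | level f k < |f x|}.indicator
          (fun _ => ENNReal.ofReal (layerHeight f k)) x ∂μ01 := by
        refine lintegral_mono fun x => ?_
        by_cases hx : level f k < |f x|
        · rw [indicator_of_mem (show x ∈ {x | level f k < |f x|} from hx)]
          exact ENNReal.ofReal_le_ofReal (layer_le_layerHeight hf k x)
        · rw [layer_eq_zero_of_abs_le hf (not_lt.mp hx), ENNReal.ofReal_zero]
          exact zero_le
    _ = ENNReal.ofReal (layerHeight f k) * μ01 {x | level f k < |f x|} :=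
        lintegral_indicator_const hmeas _
    _ ≤ ENNReal.ofReal (layerHeight f k) * ENNReal.ofReal (dyadic (k - 1)) := by
        gcongr; exact measure_level_lt_abs_le hf k
    _ = ENNReal.ofReal (layerHeight f k * dyadic (k - 1)) :=
        (ENNReal.ofReal_mul (layerHeight_nonneg hf k)).symm

lemma ae_abs_le_tsum_layer (hf : Measurable f) :
    ∀ᵐ x ∂μ01, ENNReal.ofReal |f x| ≤ ∑' k, ENNReal.ofReal (layer f k x) := by
  have hnull : μ01 (⋂ K, {x | level f K < |f x|}) = 0 := by
    refine le_antisymm (ge_of_tendsto (x := atTop) ?_ (Eventually.of_forall fun K =>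
      (measure_mono (iInter_subset _ K)).trans (measure_level_lt_abs_le hf K))) zero_le
    rw [← ENNReal.ofReal_zero]
    exact ENNReal.tendsto_ofReal (tendsto_dyadic_atTop.comp (tendsto_sub_atTop_nat 1))
  filter_upwards [measure_eq_zero_iff_ae_notMem.mp hnull] with x hx
  obtain ⟨K, hK⟩ : ∃ K, |f x| ≤ level f K := by simpa using hx
  calc ENNReal.ofReal |f x| = ∑ k ∈ Finset.range K, ENNReal.ofReal (layer f k x) := by
        rw [← ENNReal.ofReal_sum_of_nonneg fun k _ => layer_nonneg hf k x, sum_range_layer,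
          min_eq_left hK]
    _ ≤ ∑' k, ENNReal.ofReal (layer f k x) := ENNReal.sum_le_tsum _

lemma tsum_layerHeight_le (hf : Measurable f) :
    ∑' k, ENNReal.ofReal (layerHeight f k) ≤ eLpNorm f ⊤ μ01 := by
  by_cases htop : eLpNorm f ⊤ μ01 = ⊤
  · rw [htop]; exact le_top
  rw [ENNReal.tsum_eq_iSup_nat]
  refine iSup_le fun K => ?_
  rw [← ENNReal.ofReal_sum_of_nonneg fun k _ => layerHeight_nonneg hf k, sum_range_layerHeight]
  exact ENNReal.ofReal_le_of_le_toReal (level_le_toReal_eLpNorm_top htop K)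

end Layers

section LorentzBound

variable {φs f : ℝ → ℝ}

lemma tsum_ite_layerHeight (hf : Measurable f) (j : ℕ) :
    (∑' k, if k ≤ j + 1 then ENNReal.ofReal (layerHeight f k) else 0) =
      ENNReal.ofReal (decRearr f (dyadic (j + 1))) := by
  rw [tsum_eq_sum (s := Finset.range (j + 2)) fun k hk =>
      if_neg (by simp only [Finset.mem_range] at hk; omega),
    Finset.sum_congr rfl fun k hk => if_pos (by simp only [Finset.mem_range] at hk; omega),
    ← ENNReal.ofReal_sum_of_nonneg fun k _ => layerHeight_nonneg hf k, sum_range_layerHeight]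
  rfl

/-- Summation by parts, from `φs(2^{1-k}) = φs(0+) + ∑_{j ≥ k-1} dyadicDrop φs j`. -/
lemma tsum_layerHeight_mul_le (hφs : IsPhi φs) (hf : Measurable f) :
    ∑' k, ENNReal.ofReal (layerHeight f k * φs (dyadic (k - 1))) ≤
      eLpNorm f ⊤ μ01 * ENNReal.ofReal (limZero φs) +
        ∑' j, ENNReal.ofReal (decRearr f (dyadic (j + 1)) * dyadicDrop φs j) := by
  have hterm : ∀ k, ENNReal.ofReal (layerHeight f k * φs (dyadic (k - 1))) =
      ENNReal.ofReal (layerHeight f k) * ENNReal.ofReal (limZero φs) +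
        ∑' j, ENNReal.ofReal (dyadicDrop φs j) *
          (if k ≤ j + 1 then ENNReal.ofReal (layerHeight f k) else 0) := by
    intro k
    rw [ENNReal.ofReal_mul (layerHeight_nonneg hf k), hφs.ofReal_eq_limZero_add_tsum, mul_add,
      ← ENNReal.tsum_mul_left]
    congr 1
    refine tsum_congr fun j => ?_
    by_cases h : k ≤ j + 1
    · rw [if_pos (by omega), if_pos h, mul_comm]
    · rw [if_neg (by omega), if_neg h, mul_zero, mul_zero]
  have hinner : ∀ j, ∑' k, ENNReal.ofReal (dyadicDrop φs j) *
      (if k ≤ j + 1 then ENNReal.ofReal (layerHeight f k) else 0) =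
        ENNReal.ofReal (decRearr f (dyadic (j + 1)) * dyadicDrop φs j) := fun j => by
    rw [ENNReal.tsum_mul_left, tsum_ite_layerHeight hf,
      ← ENNReal.ofReal_mul (hφs.dyadicDrop_nonneg j), mul_comm]
  rw [tsum_congr hterm, ENNReal.tsum_add, ENNReal.tsum_mul_right, ENNReal.tsum_comm,
    tsum_congr hinner]
  gcongr
  exact tsum_layerHeight_le hf

lemma ofReal_decRearr_mul_dyadicDrop_le (hφs : IsPhi φs) (hf : Measurable f) (j : ℕ) :
    ENNReal.ofReal (decRearr f (dyadic (j + 1)) * dyadicDrop φs j) ≤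
      4 * ∫⁻ t in Ioc (dyadic (j + 2)) (dyadic (j + 1)),
        ENNReal.ofReal (decRearr f t * deriv φs t) := by
  set a := decRearr f (dyadic (j + 1))
  set r := dyadicDrop φs j / dyadic j
  have hr : 0 ≤ r := div_nonneg (hφs.dyadicDrop_nonneg j) (dyadic_pos j).le
  have hdy₁ : dyadic (j + 1) = dyadic j / 2 := dyadic_succ j
  have hdy₂ : dyadic (j + 2) = dyadic (j + 1) / 2 := dyadic_succ (j + 1)
  have hdy := dyadic_pos j
  have hae : ∀ᵐ t ∂volume.restrict (Ioc (dyadic (j + 2)) (dyadic (j + 1))),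
      ENNReal.ofReal (a * r) ≤ ENNReal.ofReal (decRearr f t * deriv φs t) := by
    filter_upwards [ae_restrict_of_ae hφs.ae_differentiableAt, ae_restrict_mem measurableSet_Ioc]
      with t hdiff ht
    have ht0 : 0 < t := (dyadic_pos _).trans ht.1
    have hderiv := hφs.dyadicDrop_div_le_deriv ⟨ht0, ht.2⟩
      (hdiff ⟨ht0, ht.2.trans_lt (by linarith [dyadic_le_one j])⟩)
    exact ENNReal.ofReal_le_ofReal
      (mul_le_mul (decRearr_anti hf ht0 ht.2) hderiv hr (decRearr_nonneg f t))
  have hvol : volume (Ioc (dyadic (j + 2)) (dyadic (j + 1))) = ENNReal.ofReal (dyadic j / 4) := by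
    rw [Real.volume_Ioc, hdy₂, hdy₁]
    congr 1
    ring
  calc ENNReal.ofReal (a * dyadicDrop φs j)
      = 4 * (ENNReal.ofReal (a * r) * volume (Ioc (dyadic (j + 2)) (dyadic (j + 1)))) := by
        rw [hvol, ← ENNReal.ofReal_mul (mul_nonneg (decRearr_nonneg _ _) hr),
          ← ENNReal.ofReal_ofNat 4, ← ENNReal.ofReal_mul (by norm_num)]
        congr 1
        simp only [r, a]
        field_simp
    _ = 4 * ∫⁻ _ in Ioc (dyadic (j + 2)) (dyadic (j + 1)), ENNReal.ofReal (a * r) := by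
        rw [setLIntegral_const]
    _ ≤ _ := by gcongr 1; exact lintegral_mono_ae hae

lemma tsum_decRearr_mul_dyadicDrop_le (hφs : IsPhi φs) (hf : Measurable f) :
    ∑' j, ENNReal.ofReal (decRearr f (dyadic (j + 1)) * dyadicDrop φs j) ≤
      4 * ∫⁻ t in Ioc 0 1, ENNReal.ofReal (decRearr f t * deriv φs t) := by
  have hdisj : Pairwise (Function.onFun Disjoint fun j => Ioc (dyadic (j + 2)) (dyadic (j + 1))) :=
    dyadic_antitone.pairwise_disjoint_on_Ioc_succ.comp_of_injective (add_left_injective 1)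
  calc ∑' j, ENNReal.ofReal (decRearr f (dyadic (j + 1)) * dyadicDrop φs j)
      ≤ ∑' j, 4 * ∫⁻ t in Ioc (dyadic (j + 2)) (dyadic (j + 1)),
          ENNReal.ofReal (decRearr f t * deriv φs t) :=
        ENNReal.tsum_le_tsum (ofReal_decRearr_mul_dyadicDrop_le hφs hf)
    _ = 4 * ∫⁻ t in ⋃ j, Ioc (dyadic (j + 2)) (dyadic (j + 1)),
          ENNReal.ofReal (decRearr f t * deriv φs t) := by
        rw [ENNReal.tsum_mul_left, lintegral_iUnion (fun _ => measurableSet_Ioc) hdisj]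
    _ ≤ _ := by
        gcongr
        exact iUnion_subset fun j => Ioc_subset_Ioc (dyadic_pos _).le (dyadic_le_one _)

lemma tsum_layerHeight_mul_le_lorentzNorm (hφs : IsPhi φs) (hf : Measurable f) :
    ∑' k, ENNReal.ofReal (layerHeight f k * φs (dyadic (k - 1))) ≤ 4 * lorentzNorm φs f := by
  calc _ ≤ eLpNorm f ⊤ μ01 * ENNReal.ofReal (limZero φs) +
        ∑' j, ENNReal.ofReal (decRearr f (dyadic (j + 1)) * dyadicDrop φs j) :=
        tsum_layerHeight_mul_le hφs hf
    _ ≤ 4 * (eLpNorm f ⊤ μ01 * ENNReal.ofReal (limZero φs)) +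
        4 * ∫⁻ t in Ioc 0 1, ENNReal.ofReal (decRearr f t * deriv φs t) := by
        exact add_le_add (le_mul_of_one_le_left' (by norm_num))
          (tsum_decRearr_mul_dyadicDrop_le hφs hf)
    _ = 4 * lorentzNorm φs f := by rw [lorentzNorm, mul_add]

end LorentzBound

def fiberSum (ν : ℕ → ℕ) (F : ℕ → ℝ≥0∞) (n : ℕ) : ℝ≥0∞ := ∑' k, if ν k = n then F k else 0

section FiberSum

variable {ν : ℕ → ℕ} {F G : ℕ → ℝ≥0∞} {n : ℕ}

lemma tsum_fiberSum (ν : ℕ → ℕ) (F : ℕ → ℝ≥0∞) : ∑' n, fiberSum ν F n = ∑' k, F k := by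
  simp only [fiberSum]
  rw [ENNReal.tsum_comm]
  refine tsum_congr fun k => ?_
  rw [tsum_eq_single (ν k) fun n hn => if_neg (Ne.symm hn), if_pos rfl]

lemma fiberSum_mono (h : ∀ k, F k ≤ G k) (n : ℕ) : fiberSum ν F n ≤ fiberSum ν G n :=
  ENNReal.tsum_le_tsum fun k => by split_ifs; exacts [h k, le_rfl]

lemma fiberSum_le_tsum : fiberSum ν F n ≤ ∑' k, F k :=
  ENNReal.tsum_le_tsum fun k => by split_ifs; exacts [le_rfl, zero_le]

lemma fiberSum_congr (h : ∀ k, ν k = n → F k = G k) : fiberSum ν F n = fiberSum ν G n :=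
  tsum_congr fun k => by split_ifs with hk; exacts [h k hk, rfl]

lemma mul_fiberSum (a : ℝ≥0∞) : a * fiberSum ν F n = fiberSum ν (fun k => a * F k) n := by
  rw [fiberSum, ← ENNReal.tsum_mul_left]
  exact tsum_congr fun k => by split_ifs <;> simp

lemma fiberSum_add : fiberSum ν F n + fiberSum ν G n = fiberSum ν (F + G) n := by
  rw [fiberSum, fiberSum, ← ENNReal.tsum_add]
  exact tsum_congr fun k => by split_ifs <;> simp

lemma fiberSum_ne_top_of_finite (hν : {k | ν k = n}.Finite) (hF : ∀ k, F k ≠ ⊤) :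
    fiberSum ν F n ≠ ⊤ := by
  rw [fiberSum, tsum_eq_sum (s := hν.toFinset) fun k hk => if_neg (by simpa using hk)]
  exact (ENNReal.sum_lt_top.mpr fun k _ => by split_ifs; exacts [(hF k).lt_top, zero_lt_top]).ne

lemma finite_setOf_eq_of_tendsto {a b : ℕ → ℝ} (ha : Tendsto a atTop (𝓝 0)) (hb : ∀ n, 0 < b n)
    (hν : ∀ k, b (ν k) ≤ a k) (n : ℕ) : {k | ν k = n}.Finite := by
  obtain ⟨K, hK⟩ := eventually_atTop.mp (ha.eventually_lt_const (hb n))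
  refine (finite_lt_nat K).subset fun k (hk : ν k = n) => show k < K from ?_
  by_contra! hKk
  exact (hν k).not_gt (hk ▸ hK k hKk)

end FiberSum

def groupedLayers (ν : ℕ → ℕ) (u : ℕ → ℝ → ℝ) (n : ℕ) (x : ℝ) : ℝ :=
  (fiberSum ν (fun k => ENNReal.ofReal (u k x)) n).toReal

section Grouping

variable {ν : ℕ → ℕ} {u : ℕ → ℝ → ℝ} {h : ℕ → ℝ}

lemma groupedLayers_nonneg (n : ℕ) (x : ℝ) : 0 ≤ groupedLayers ν u n x := ENNReal.toReal_nonneg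

lemma ofReal_groupedLayers (huh : ∀ k x, u k x ≤ h k)
    (hfin : ∀ n, fiberSum ν (fun k => ENNReal.ofReal (h k)) n ≠ ⊤) (n : ℕ) (x : ℝ) :
    ENNReal.ofReal (groupedLayers ν u n x) = fiberSum ν (fun k => ENNReal.ofReal (u k x)) n :=
  ENNReal.ofReal_toReal <| ne_top_of_le_ne_top (hfin n) <|
    fiberSum_mono (fun k => ENNReal.ofReal_le_ofReal (huh k x)) n

lemma measurable_groupedLayers (hu : ∀ k, Measurable (u k)) (n : ℕ) :
    Measurable (groupedLayers ν u n) :=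
  (Measurable.tsum fun k => by
    split_ifs; exacts [(hu k).ennreal_ofReal, measurable_const]).ennreal_toReal

lemma eLpNorm_top_groupedLayers_le (huh : ∀ k x, u k x ≤ h k)
    (hfin : ∀ n, fiberSum ν (fun k => ENNReal.ofReal (h k)) n ≠ ⊤) (n : ℕ) :
    eLpNorm (groupedLayers ν u n) ⊤ μ01 ≤ fiberSum ν (fun k => ENNReal.ofReal (h k)) n := by
  rw [eLpNorm_exponent_top]
  refine essSup_le_of_ae_le _ (Eventually.of_forall fun x =>
    show ‖groupedLayers ν u n x‖ₑ ≤ _ from ?_)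
  rw [Real.enorm_eq_ofReal (groupedLayers_nonneg n x), ofReal_groupedLayers huh hfin]
  exact fiberSum_mono (fun k => ENNReal.ofReal_le_ofReal (huh k x)) n

lemma eLpNorm_one_groupedLayers_le (hu : ∀ k, Measurable (u k)) (huh : ∀ k x, u k x ≤ h k)
    (hfin : ∀ n, fiberSum ν (fun k => ENNReal.ofReal (h k)) n ≠ ⊤) {τ : ℕ → ℝ}
    (hint : ∀ k, ∫⁻ x, ENNReal.ofReal (u k x) ∂μ01 ≤ ENNReal.ofReal (h k * τ k)) (n : ℕ) :
    eLpNorm (groupedLayers ν u n) 1 μ01 ≤ fiberSum ν (fun k => ENNReal.ofReal (h k * τ k)) n := by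
  rw [eLpNorm_one_eq_lintegral_enorm]
  calc ∫⁻ x, ‖groupedLayers ν u n x‖ₑ ∂μ01
      = ∫⁻ x, fiberSum ν (fun k => ENNReal.ofReal (u k x)) n ∂μ01 := lintegral_congr fun x => by
        rw [Real.enorm_eq_ofReal (groupedLayers_nonneg n x), ofReal_groupedLayers huh hfin]
    _ = fiberSum ν (fun k => ∫⁻ x, ENNReal.ofReal (u k x) ∂μ01) n := by
        simp only [fiberSum]
        rw [lintegral_tsum fun k => by
          split_ifs; exacts [(hu k).ennreal_ofReal.aemeasurable, aemeasurable_const]]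
        exact tsum_congr fun k => by split_ifs <;> simp
    _ ≤ _ := fiberSum_mono hint n

lemma admissible_groupedLayers (hu : ∀ k, Measurable (u k)) (huh : ∀ k x, u k x ≤ h k)
    (hfin : ∀ n, fiberSum ν (fun k => ENNReal.ofReal (h k)) n ≠ ⊤) {f : ℝ → ℝ}
    (hcover : ∀ᵐ x ∂μ01, ENNReal.ofReal |f x| ≤ ∑' k, ENNReal.ofReal (u k x)) :
    Admissible f (groupedLayers ν u) := by
  refine ⟨fun n => (measurable_groupedLayers hu n).aemeasurable,
    fun n => (eLpNorm_top_groupedLayers_le huh hfin n).trans_lt (hfin n).lt_top,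
    fun n x => ENNReal.toReal_nonneg, hcover.mono fun x hx => hx.trans_eq ?_⟩
  rw [← tsum_fiberSum ν]
  exact tsum_congr fun n => (ofReal_groupedLayers huh hfin n x).symm

end Grouping

/-- With `M = ‖g‖_∞` and `L = ‖g‖₁` this bounds the cost of a single piece `g`. -/
lemma IsPhi.ofReal_mul_toReal_mul_le {φ : ℝ → ℝ} (hφ : IsPhi φ) {w σ : ℝ} (hw : 0 ≤ w)
    (hσ : σ ∈ Ioc (0 : ℝ) 1) {M L : ℝ≥0∞} (hLM : L ≤ M) (hM : M ≠ ⊤) :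
    ENNReal.ofReal (w * M.toReal * φ (L / M).toReal) ≤
      ENNReal.ofReal (φ σ / σ * w) * (ENNReal.ofReal σ * M + L) := by
  rcases eq_or_ne M 0 with rfl | hM0
  · simp
  have hMpos : 0 < M.toReal := ENNReal.toReal_pos hM0 hM
  have hL : L ≠ ⊤ := ne_top_of_le_ne_top hM hLM
  have hc : 0 ≤ φ σ / σ * w := mul_nonneg (div_nonneg (hφ.nonneg hσ.1.le hσ.2) hσ.1.le) hw
  have hr : (L / M).toReal ∈ Icc (0 : ℝ) 1 := by
    rw [ENNReal.toReal_div]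
    exact ⟨by positivity, (div_le_one hMpos).mpr (ENNReal.toReal_mono hM hLM)⟩
  have hreal : w * M.toReal * φ (L / M).toReal ≤ φ σ / σ * w * (σ * M.toReal + L.toReal) :=
    calc w * M.toReal * φ (L / M).toReal
        ≤ w * M.toReal * (φ σ / σ * (σ + (L / M).toReal)) := by
          gcongr; exact hφ.le_div_mul_add hσ hr
      _ = φ σ / σ * w * (σ * M.toReal + L.toReal) := by
          rw [ENNReal.toReal_div]; field_simp
  calc _ ≤ ENNReal.ofReal (φ σ / σ * w * (σ * M.toReal + L.toReal)) :=
        ENNReal.ofReal_le_ofReal hreal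
    _ = _ := by
        rw [ENNReal.ofReal_mul hc,
          ENNReal.ofReal_add (mul_nonneg hσ.1.le ENNReal.toReal_nonneg) ENNReal.toReal_nonneg,
          ENNReal.ofReal_mul hσ.1.le, ENNReal.ofReal_toReal hM, ENNReal.ofReal_toReal hL]

def phiSeqCoeff (φ ψ : ℝ → ℝ) (s : ℕ → ℝ) (n : ℕ) : ℝ := φ (s n) / s n * ψ ((n : ℝ) + 1)

theorem QANorm_le_tsum_of_layers {φ ψ : ℝ → ℝ} (hφ : IsPhi φ) (hψ : ∀ n : ℕ, 0 ≤ ψ ((n : ℝ) + 1))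
    {s : ℕ → ℝ} (hs : ∀ n, s n ∈ Ioc (0 : ℝ) 1) {f : ℝ → ℝ} {u : ℕ → ℝ → ℝ} {h τ : ℕ → ℝ}
    (hu : ∀ k, Measurable (u k)) (huh : ∀ k x, u k x ≤ h k) (hh : ∀ k, 0 ≤ h k)
    (hτ : ∀ k, 0 ≤ τ k) (hint : ∀ k, ∫⁻ x, ENNReal.ofReal (u k x) ∂μ01 ≤ ENNReal.ofReal (h k * τ k))
    (hcover : ∀ᵐ x ∂μ01, ENNReal.ofReal |f x| ≤ ∑' k, ENNReal.ofReal (u k x))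
    {ν : ℕ → ℕ} (hfin : ∀ n, fiberSum ν (fun k => ENNReal.ofReal (h k)) n ≠ ⊤) :
    QANorm φ ψ f ≤ ∑' k, ENNReal.ofReal (phiSeqCoeff φ ψ s (ν k) * (h k * (s (ν k) + τ k))) := by
  set g := groupedLayers ν u
  have hc : ∀ n, 0 ≤ phiSeqCoeff φ ψ s n := fun n =>
    mul_nonneg (div_nonneg (hφ.nonneg (hs n).1.le (hs n).2) (hs n).1.le) (hψ n)
  have hpiece : ∀ n, ENNReal.ofReal (phiSeqCoeff φ ψ s n) *
      (ENNReal.ofReal (s n) * fiberSum ν (fun k => ENNReal.ofReal (h k)) n +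
        fiberSum ν (fun k => ENNReal.ofReal (h k * τ k)) n) =
      fiberSum ν
        (fun k => ENNReal.ofReal (phiSeqCoeff φ ψ s (ν k) * (h k * (s (ν k) + τ k)))) n := by
    intro n
    rw [mul_fiberSum, fiberSum_add, mul_fiberSum]
    refine fiberSum_congr fun k hk => ?_
    rw [hk, Pi.add_apply, ← ENNReal.ofReal_mul (hs n).1.le,
      ← ENNReal.ofReal_add (mul_nonneg (hs n).1.le (hh k)) (mul_nonneg (hh k) (hτ k)),
      ← ENNReal.ofReal_mul (hc n)]
    ring_nf
  calc QANorm φ ψ f ≤ seqCost φ ψ g := iInf₂_le g (admissible_groupedLayers hu huh hfin hcover)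
    _ ≤ ∑' n, ENNReal.ofReal (phiSeqCoeff φ ψ s n) *
          (ENNReal.ofReal (s n) * fiberSum ν (fun k => ENNReal.ofReal (h k)) n +
            fiberSum ν (fun k => ENNReal.ofReal (h k * τ k)) n) := by
        refine ENNReal.tsum_le_tsum fun n => ?_
        have htop := eLpNorm_top_groupedLayers_le huh hfin n
        calc _ ≤ ENNReal.ofReal (phiSeqCoeff φ ψ s n) *
              (ENNReal.ofReal (s n) * eLpNorm (g n) ⊤ μ01 + eLpNorm (g n) 1 μ01) :=
              hφ.ofReal_mul_toReal_mul_le (hψ n) (hs n)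
                (eLpNorm_le_eLpNorm_of_exponent_le le_top
                  (measurable_groupedLayers hu n).aestronglyMeasurable)
                (htop.trans_lt (hfin n).lt_top).ne
          _ ≤ _ := by
              gcongr
              exact eLpNorm_one_groupedLayers_le hu huh hfin hint n
    _ = ∑' k, ENNReal.ofReal (phiSeqCoeff φ ψ s (ν k) * (h k * (s (ν k) + τ k))) := by
        rw [tsum_congr hpiece, tsum_fiberSum]

lemma exists_phiSeqCoeff_mul_max_lt {φ ψ φs : ℝ → ℝ} {s : ℕ → ℝ} {t : ℝ} (ht : t ≠ 0)
    (hle : phiSeq φ ψ s t ≤ φs t) (hpos : 0 < φs t) :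
    ∃ n, phiSeqCoeff φ ψ s n * max (s n) t < 2 * φs t := by
  have hlt : phiSeq φ ψ s t < 2 * φs t := by linarith
  rw [phiSeq, if_neg ht] at hlt
  obtain ⟨n, hn⟩ := exists_lt_of_ciInf_lt hlt
  exact ⟨n, lt_of_eq_of_lt (by unfold phiSeqCoeff; ring) hn⟩

section CongrAE

variable {f f' : ℝ → ℝ}

lemma admissible_congr_ae (h : f =ᵐ[μ01] f') (g : ℕ → ℝ → ℝ) :
    Admissible f g ↔ Admissible f' g := by
  have hcover : (∀ᵐ x ∂μ01, ENNReal.ofReal |f x| ≤ ∑' n, ENNReal.ofReal (g n x)) ↔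
      ∀ᵐ x ∂μ01, ENNReal.ofReal |f' x| ≤ ∑' n, ENNReal.ofReal (g n x) :=
    eventually_congr (h.mono fun x hx => by rw [hx])
  simp only [Admissible, hcover]

lemma QANorm_congr_ae (φ ψ : ℝ → ℝ) (h : f =ᵐ[μ01] f') : QANorm φ ψ f = QANorm φ ψ f' := by
  simp only [QANorm, admissible_congr_ae h]

lemma lorentzNorm_congr_ae (ζ : ℝ → ℝ) (h : f =ᵐ[μ01] f') :
    lorentzNorm ζ f = lorentzNorm ζ f' := by
  rw [lorentzNorm, lorentzNorm, eLpNorm_congr_ae h, decRearr_congr_ae h]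

end CongrAE

lemma eLpNorm_ne_top_or_limZero_eq_zero {φs f : ℝ → ℝ} (hφs : IsPhi φs)
    (h : lorentzNorm φs f ≠ ⊤) : eLpNorm f ⊤ μ01 ≠ ⊤ ∨ limZero φs = 0 := by
  by_contra! hcon
  have hL : 0 < limZero φs := lt_of_le_of_ne hφs.limZero_nonneg (Ne.symm hcon.2)
  refine h ?_
  rw [lorentzNorm, ENNReal.mul_eq_top.mpr (Or.inr ⟨hcon.1, (ENNReal.ofReal_pos.mpr hL).ne'⟩),
    top_add]

lemma fiberSum_layerHeight_ne_top {φs f : ℝ → ℝ} (hφs : IsPhi φs) (hf : Measurable f)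
    (hcase : eLpNorm f ⊤ μ01 ≠ ⊤ ∨ limZero φs = 0) {ν : ℕ → ℕ} {b : ℕ → ℝ} (hb : ∀ n, 0 < b n)
    (hν : ∀ k, b (ν k) ≤ 2 * φs (dyadic (k - 1))) (n : ℕ) :
    fiberSum ν (fun k => ENNReal.ofReal (layerHeight f k)) n ≠ ⊤ := by
  rcases hcase with hE | hL
  · exact ne_top_of_le_ne_top hE (fiberSum_le_tsum.trans (tsum_layerHeight_le hf))
  -- `φs(0+) = 0` forces `ν k → ∞`, so every fiber of `ν` is finite
  refine fiberSum_ne_top_of_finite (finite_setOf_eq_of_tendsto ?_ hb hν n)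
    fun _ => ENNReal.ofReal_ne_top
  simpa [hL] using (hφs.tendsto_limZero.comp (tendsto_sub_atTop_nat 1)).const_mul 2

lemma ofReal_mul_mul_add_le {c h σ τ y : ℝ} (hc : 0 ≤ c) (hh : 0 ≤ h)
    (hlt : c * max σ τ < 2 * y) :
    ENNReal.ofReal (c * (h * (σ + τ))) ≤ 4 * ENNReal.ofReal (h * y) := by
  have hcσ : c * (σ + τ) ≤ 4 * y := by
    nlinarith [mul_le_mul_of_nonneg_left (le_max_left σ τ) hc,
      mul_le_mul_of_nonneg_left (le_max_right σ τ) hc]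
  rw [← ENNReal.ofReal_ofNat 4, ← ENNReal.ofReal_mul (by norm_num)]
  refine ENNReal.ofReal_le_ofReal ?_
  calc c * (h * (σ + τ)) = h * (c * (σ + τ)) := by ring
    _ ≤ h * (4 * y) := by gcongr
    _ = 4 * (h * y) := by ring

theorem QANorm_le_lorentzNorm_of_measurable {φ ψ φs : ℝ → ℝ} (hφ : IsPhi φ)
    (hψ : ∀ n : ℕ, 0 < ψ ((n : ℝ) + 1)) {s : ℕ → ℝ} (hs : ∀ n, s n ∈ Ioc (0 : ℝ) 1)
    (hφs : IsPhi φs) (hle : ∀ t ∈ Ioc (0 : ℝ) 1, phiSeq φ ψ s t ≤ φs t) {f : ℝ → ℝ}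
    (hf : Measurable f) : QANorm φ ψ f ≤ 16 * lorentzNorm φs f := by
  by_cases htop : lorentzNorm φs f = ⊤
  · rw [htop, ENNReal.mul_top (by norm_num)]
    exact le_top
  have hτ : ∀ k, dyadic (k - 1) ∈ Ioc (0 : ℝ) 1 := fun k => dyadic_mem_Ioc _
  choose ν hν using fun k => exists_phiSeqCoeff_mul_max_lt (hτ k).1.ne' (hle _ (hτ k))
    (hφs.pos _ (hτ k).1 (hτ k).2)
  have hc : ∀ n, 0 < phiSeqCoeff φ ψ s n := fun n =>
    mul_pos (div_pos (hφ.pos _ (hs n).1 (hs n).2) (hs n).1) (hψ n)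
  have hfin := fiberSum_layerHeight_ne_top hφs hf (eLpNorm_ne_top_or_limZero_eq_zero hφs htop)
    (fun n => mul_pos (hc n) (hs n).1)
    (fun k => (mul_le_mul_of_nonneg_left (le_max_left _ _) (hc _).le).trans (hν k).le)
  calc QANorm φ ψ f
      ≤ ∑' k, ENNReal.ofReal (phiSeqCoeff φ ψ s (ν k) *
          (layerHeight f k * (s (ν k) + dyadic (k - 1)))) :=
        QANorm_le_tsum_of_layers hφ (fun n => (hψ n).le) hs (measurable_layer hf)
          (layer_le_layerHeight hf) (layerHeight_nonneg hf) (fun k => (hτ k).1.le)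
          (lintegral_layer_le hf) (ae_abs_le_tsum_layer hf) hfin
    _ ≤ ∑' k, 4 * ENNReal.ofReal (layerHeight f k * φs (dyadic (k - 1))) :=
        ENNReal.tsum_le_tsum fun k =>
          ofReal_mul_mul_add_le (hc _).le (layerHeight_nonneg hf k) (hν k)
    _ ≤ 4 * (4 * lorentzNorm φs f) := by
        rw [ENNReal.tsum_mul_left]
        gcongr
        exact tsum_layerHeight_mul_le_lorentzNorm hφs hf
    _ = 16 * lorentzNorm φs f := by
        rw [← mul_assoc]
        norm_num

/-- for any sequence `s ⊂ (0,1]`, if `φ̃ₛ` is a concave, non-decreasing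
function vanishing only at the origin with `φₛ ≤ φ̃ₛ ≤ 2 φₛ` on `[0,1]`, then
`Λ_{φ̃ₛ} ↪ QA_{φ,ψ}` continuously. -/
theorem stmt13 {φ ψ : ℝ → ℝ} (hφ : IsPhi φ) (hψ : IsPsi ψ)
    (s : ℕ → ℝ) (hs : ∀ n, s n ∈ Set.Ioc (0:ℝ) 1)
    (φs : ℝ → ℝ) (hφs : IsPhi φs)
    (hequiv : ∀ t ∈ Set.Icc (0:ℝ) 1,
      phiSeq φ ψ s t ≤ φs t ∧ φs t ≤ 2 * phiSeq φ ψ s t) :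
    ∃ C : ℝ, 0 < C ∧ ∀ f : ℝ → ℝ, MemLorentz φs f →
      QANorm φ ψ f ≤ ENNReal.ofReal C * lorentzNorm φs f := by
  refine ⟨16, by norm_num, fun f ⟨hf, _⟩ => ?_⟩
  rw [QANorm_congr_ae φ ψ hf.ae_eq_mk, lorentzNorm_congr_ae φs hf.ae_eq_mk, ENNReal.ofReal_ofNat]
  exact QANorm_le_lorentzNorm_of_measurable hφ (fun n => hψ.pos _ (by positivity)) hs hφs
    (fun t ht => (hequiv t (Ioc_subset_Icc_self ht)).1) hf.measurable_mk
end
end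

section
/- Let $s:[1,\infty)\to(0,1]$ be a continuous, strictly decreasing function such that (i) $\lim_{x\to\infty}s(x)=0$, (ii) $\lim_{x\to\infty}\varphi(s(x))\psi(x)=0$, (iii) there exists $x_0\ge 1$ such that $x\mapsto\varphi(s(x))\psi(x)$ is non-increasing on $[x_0,\infty)$, and (iv) there exists $C>0$ such that $\varphi(s(n+1))/s(n+1)\le C\,\varphi(s(n))/s(n)$ for all $n\in\mathbb{N}$. Then the function $\varphi_s$ built from the sequence $s_n=s(n)$ is equivalent to $\alpha_s(t)=\varphi(t)\,\psi(s^{-1}(t))$: there exist constants $c_1,c_2>0$ such that $c_1\,\varphi(t)\,\psi(s^{-1}(t))\le\varphi_s(t)\le c_2\,\varphi(t)\,\psi(s^{-1}(t))$ for all $t\in(0,s(1)]$. -/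
open MeasureTheory ENNReal Set Filter Topology

noncomputable section

/-- For a concave function vanishing at `0`, the ratio `φ t / t` is non-increasing. -/
lemma conc_ratio {φ : ℝ → ℝ} (hc : ConcaveOn ℝ (Set.Icc 0 1) φ) (h0 : φ 0 = 0)
    {a b : ℝ} (ha : 0 < a) (hab : a ≤ b) (hb : b ≤ 1) : φ b / b ≤ φ a / a := by
  have hb0 : 0 < b := ha.trans_le hab
  have hmem0 : (0:ℝ) ∈ Set.Icc (0:ℝ) 1 := Set.mem_Icc.mpr ⟨le_rfl, zero_le_one⟩
  have hmemb : b ∈ Set.Icc (0:ℝ) 1 := Set.mem_Icc.mpr ⟨hb0.le, hb⟩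
  have hw1 : (0:ℝ) ≤ 1 - a / b := by
    have : a / b ≤ 1 := by rw [div_le_one hb0]; exact hab
    linarith
  have hw2 : (0:ℝ) ≤ a / b := by positivity
  have h := hc.2 hmem0 hmemb hw1 hw2 (by ring)
  have hcomb : (1 - a / b) • (0:ℝ) + (a / b) • b = a := by
    simp [smul_eq_mul]
    field_simp
  rw [hcomb] at h
  simp only [smul_eq_mul, h0, mul_zero, zero_add] at h
  rw [div_le_div_iff₀ hb0 ha]
  have : a / b * φ b * b = φ b * a := by field_simp
  nlinarith [h]

/-- Concave function vanishing at `0` satisfies `ψ (2x) ≤ 2 ψ x`. -/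
lemma psi_doubling {ψ : ℝ → ℝ} (hc : ConcaveOn ℝ (Set.Ici 0) ψ) (h0 : ψ 0 = 0)
    {x : ℝ} (hx : 0 ≤ x) : ψ (2 * x) ≤ 2 * ψ x := by
  have h := hc.2 (Set.mem_Ici.mpr le_rfl)
    (Set.mem_Ici.mpr (by positivity : (0:ℝ) ≤ 2 * x))
    (by norm_num : (0:ℝ) ≤ 1/2) (by norm_num : (0:ℝ) ≤ 1/2) (by norm_num)
  have hcomb : (1/2 : ℝ) • (0:ℝ) + (1/2 : ℝ) • (2 * x) = x := by
    rw [smul_eq_mul, smul_eq_mul]; ring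
  rw [hcomb] at h
  simp only [smul_eq_mul, h0, mul_zero, zero_add] at h
  linarith

/-- if `s : [1,∞) → (0,1]` is continuous, strictly decreasing, with
`s(x) → 0`, `φ(s(x))ψ(x) → 0`, `(φ∘s)·ψ` eventually non-increasing, and
`φ(s(n+1))/s(n+1) ≤ C φ(s(n))/s(n)`, then `φₛ` (built from `sₙ = s(n)`) is equivalent to
`αₛ(t) = φ(t) ψ(s⁻¹(t))` on `(0, s(1)]`; here the points `t ∈ (0, s(1)]` are
parametrized as `t = s(x)`, `x ≥ 1` (so that `ψ(s⁻¹(t)) = ψ(x)`). -/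
theorem stmt14 {φ ψ : ℝ → ℝ} (hφ : IsPhi φ) (hψ : IsPsi ψ)
    (s : ℝ → ℝ) (hmap : ∀ x : ℝ, 1 ≤ x → s x ∈ Set.Ioc (0:ℝ) 1)
    (hcont : ContinuousOn s (Set.Ici 1))
    (hanti : StrictAntiOn s (Set.Ici 1))
    (h1 : Tendsto s atTop (𝓝 0))
    (h2 : Tendsto (fun x => φ (s x) * ψ x) atTop (𝓝 0))
    (h3 : ∃ x0 : ℝ, 1 ≤ x0 ∧ AntitoneOn (fun x => φ (s x) * ψ x) (Set.Ici x0))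
    (h4 : ∃ C : ℝ, 0 < C ∧ ∀ n : ℕ, 1 ≤ n →
      φ (s ((n : ℝ) + 1)) / s ((n : ℝ) + 1) ≤ C * (φ (s (n : ℝ)) / s (n : ℝ))) :
    ∃ c1 c2 : ℝ, 0 < c1 ∧ 0 < c2 ∧ ∀ x : ℝ, 1 ≤ x →
      c1 * (φ (s x) * ψ x) ≤ phiSeq φ ψ (fun n => s ((n : ℝ) + 1)) (s x) ∧
      phiSeq φ ψ (fun n => s ((n : ℝ) + 1)) (s x) ≤ c2 * (φ (s x) * ψ x) := by
  obtain ⟨x0, hx01, h3'⟩ := h3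
  obtain ⟨C, hC, h4'⟩ := h4
  have santi : AntitoneOn s (Set.Ici 1) := hanti.antitoneOn
  have hφpos : ∀ x : ℝ, 1 ≤ x → 0 < φ (s x) :=
    fun x hx => hφ.pos _ (hmap x hx).1 (hmap x hx).2
  have hψpos : ∀ x : ℝ, 1 ≤ x → 0 < ψ x := fun x hx => hψ.pos x (by linarith)
  have hspos : ∀ x : ℝ, 1 ≤ x → 0 < s x := fun x hx => (hmap x hx).1
  set m0 : ℝ := φ (s x0) * ψ 1 with hm0def
  set M : ℝ := φ 1 * ψ x0 with hMdef
  have hm0 : 0 < m0 := mul_pos (hφpos x0 hx01) (hψpos 1 le_rfl)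
  have hφ1 : 0 < φ 1 := hφ.pos 1 one_pos le_rfl
  have hM : 0 < M := mul_pos hφ1 (hψpos x0 hx01)
  -- uniform upper bound for φ(s x) ψ x
  have hbound : ∀ x : ℝ, 1 ≤ x → φ (s x) * ψ x ≤ M := by
    intro x hx
    rcases le_total x x0 with h | h
    · have h1' : φ (s x) ≤ φ 1 :=
        hφ.mono (Set.mem_Icc.mpr ⟨(hspos x hx).le, (hmap x hx).2⟩)
          (Set.mem_Icc.mpr ⟨zero_le_one, le_rfl⟩) (hmap x hx).2
      have h2' : ψ x ≤ ψ x0 :=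
        hψ.mono (Set.mem_Ici.mpr (by linarith)) (Set.mem_Ici.mpr (by linarith)) h
      exact mul_le_mul h1' h2' (hψpos x hx).le hφ1.le
    · have key := h3' (Set.mem_Ici.mpr le_rfl) (Set.mem_Ici.mpr h) h
      simp only at key
      have h1' : φ (s x0) ≤ φ 1 :=
        hφ.mono (Set.mem_Icc.mpr ⟨(hspos x0 hx01).le, (hmap x0 hx01).2⟩)
          (Set.mem_Icc.mpr ⟨zero_le_one, le_rfl⟩) (hmap x0 hx01).2
      have h2' : φ (s x0) * ψ x0 ≤ φ 1 * ψ x0 :=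
        mul_le_mul_of_nonneg_right h1' (hψpos x0 hx01).le
      rw [hMdef]; linarith
  refine ⟨min 1 (m0 / M), max 1 (2 * C), lt_min one_pos (by positivity),
    lt_max_of_lt_left one_pos, fun x hx => ?_⟩
  have hprodpos : 0 < φ (s x) * ψ x := mul_pos (hφpos x hx) (hψpos x hx)
  have hsxpos : 0 < s x := hspos x hx
  have hsne : s x ≠ 0 := hsxpos.ne'
  have hc1le : min 1 (m0 / M) ≤ 1 := min_le_left _ _
  -- rewrite phiSeq
  have hps : phiSeq φ ψ (fun n => s ((n : ℝ) + 1)) (s x)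
      = ⨅ n : ℕ, max (s ((n : ℝ) + 1)) (s x) *
          (φ (s ((n : ℝ) + 1)) / s ((n : ℝ) + 1)) * ψ ((n : ℝ) + 1) := by
    simp [phiSeq, hsne]
  have hy1 : ∀ n : ℕ, (1:ℝ) ≤ (n : ℝ) + 1 := by
    intro n; have : (0:ℝ) ≤ (n:ℝ) := Nat.cast_nonneg n; linarith
  have hFnn : ∀ n : ℕ, 0 ≤ max (s ((n : ℝ) + 1)) (s x) *
      (φ (s ((n : ℝ) + 1)) / s ((n : ℝ) + 1)) * ψ ((n : ℝ) + 1) := by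
    intro n
    have h1' := hspos _ (hy1 n)
    have h2' := hφpos _ (hy1 n)
    have h3'' := hψpos _ (hy1 n)
    have hmx : 0 ≤ max (s ((n : ℝ) + 1)) (s x) := le_trans h1'.le (le_max_left _ _)
    exact mul_nonneg (mul_nonneg hmx (by positivity)) h3''.le
  rw [hps]
  constructor
  · -- lower bound
    apply le_ciInf
    intro n
    set y : ℝ := (n : ℝ) + 1 with hydef
    have hy : (1:ℝ) ≤ y := hy1 n
    have hsypos : 0 < s y := hspos y hy
    have hψypos : 0 < ψ y := hψpos y hy
    have hφypos : 0 < φ (s y) := hφpos y hy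
    rcases le_total x y with hxy | hyx
    · -- case x ≤ y : max = s x
      have hsy : s y ≤ s x := santi (Set.mem_Ici.mpr hx) (Set.mem_Ici.mpr hy) hxy
      rw [max_eq_right hsy]
      have hratio : φ (s x) / s x ≤ φ (s y) / s y :=
        conc_ratio hφ.concave hφ.zero hsypos hsy (hmap x hx).2
      have hψle : ψ x ≤ ψ y :=
        hψ.mono (Set.mem_Ici.mpr (by linarith)) (Set.mem_Ici.mpr (by linarith)) hxy
      have key : s x * (φ (s x) / s x) * ψ x ≤ s x * (φ (s y) / s y) * ψ y := by
        apply mul_le_mul (mul_le_mul_of_nonneg_left hratio hsxpos.le) hψle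
          (hψpos x hx).le
        exact mul_nonneg hsxpos.le (by positivity)
      have hid : s x * (φ (s x) / s x) = φ (s x) := by field_simp
      rw [hid] at key
      nlinarith
    · -- case y ≤ x : max = s y
      have hsy : s x ≤ s y := santi (Set.mem_Ici.mpr hy) (Set.mem_Ici.mpr hx) hyx
      rw [max_eq_left hsy]
      have hid : s y * (φ (s y) / s y) * ψ y = φ (s y) * ψ y := by field_simp
      rw [hid]
      rcases le_total x0 y with hx0y | hyx0
      · -- y ≥ x0 : use antitonicity of φ(s·)ψ·
        have key := h3' (Set.mem_Ici.mpr hx0y) (Set.mem_Ici.mpr (le_trans hx0y hyx)) hyx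
        simp only at key
        nlinarith
      · -- y < x0 : term is ≥ m0, and φ(s x)ψ x ≤ M
        have hsy0 : s x0 ≤ s y := santi (Set.mem_Ici.mpr hy) (Set.mem_Ici.mpr hx01) hyx0
        have hφy : φ (s x0) ≤ φ (s y) :=
          hφ.mono (Set.mem_Icc.mpr ⟨(hspos x0 hx01).le, (hmap x0 hx01).2⟩)
            (Set.mem_Icc.mpr ⟨hsypos.le, (hmap y hy).2⟩) hsy0
        have hψy : ψ 1 ≤ ψ y :=
          hψ.mono (Set.mem_Ici.mpr zero_le_one) (Set.mem_Ici.mpr (by linarith)) hy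
        have hterm : m0 ≤ φ (s y) * ψ y := by
          rw [hm0def]
          have := mul_le_mul hφy hψy (hψpos 1 le_rfl).le hφypos.le
          linarith
        have hb := hbound x hx
        have hkey : min 1 (m0 / M) * (φ (s x) * ψ x) ≤ (m0 / M) * M := by
          have h5 : min 1 (m0 / M) ≤ m0 / M := min_le_right _ _
          have h6 : 0 < m0 / M := by positivity
          nlinarith
        rw [div_mul_cancel₀ _ hM.ne'] at hkey
        linarith
  · -- upper bound
    have hBdd : BddBelow (Set.range fun n : ℕ => max (s ((n : ℝ) + 1)) (s x) *
        (φ (s ((n : ℝ) + 1)) / s ((n : ℝ) + 1)) * ψ ((n : ℝ) + 1)) :=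
      ⟨0, by rintro v ⟨n, rfl⟩; exact hFnn n⟩
    set m : ℕ := ⌈x⌉₊ with hmdef
    have hm1 : 1 ≤ m := Nat.one_le_ceil_iff.mpr (by linarith)
    have hxm : x ≤ (m : ℝ) := Nat.le_ceil x
    have hmx : (m : ℝ) < x + 1 := Nat.ceil_lt_add_one (by linarith)
    obtain ⟨j, hj⟩ : ∃ j, m = j + 1 := ⟨m - 1, (Nat.succ_pred_eq_of_pos hm1).symm⟩
    have hjcast : ((j : ℝ) + 1) = (m : ℝ) := by rw [hj]; push_cast; ring
    have hstep : (⨅ n : ℕ, max (s ((n : ℝ) + 1)) (s x) *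
        (φ (s ((n : ℝ) + 1)) / s ((n : ℝ) + 1)) * ψ ((n : ℝ) + 1))
        ≤ max (s ((j : ℝ) + 1)) (s x) *
          (φ (s ((j : ℝ) + 1)) / s ((j : ℝ) + 1)) * ψ ((j : ℝ) + 1) := ciInf_le hBdd j
    rw [hjcast] at hstep
    have hmR : (1:ℝ) ≤ (m:ℝ) := by exact_mod_cast hm1
    have hsm : s (m : ℝ) ≤ s x :=
      santi (Set.mem_Ici.mpr hx) (Set.mem_Ici.mpr hmR) hxm
    rw [max_eq_right hsm] at hstep
    rcases Nat.lt_or_ge j 1 with hj0 | hj1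
    · -- j = 0, so m = 1 and x = 1
      have hj0' : j = 0 := by omega
      have hm1' : (m : ℝ) = 1 := by rw [hj, hj0']; norm_num
      have hx1 : x = 1 := le_antisymm (by rw [← hm1']; exact hxm) hx
      rw [hm1'] at hstep
      rw [show s (1:ℝ) = s x from by rw [hx1], show ψ (1:ℝ) = ψ x from by rw [hx1]] at hstep
      have hid : s x * (φ (s x) / s x) * ψ x = φ (s x) * ψ x := by field_simp
      rw [hid] at hstep
      have hh := mul_le_mul_of_nonneg_right (le_max_left (1:ℝ) (2 * C)) hprodpos.le
      linarith
    · -- j ≥ 1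
      have hjR : (1:ℝ) ≤ (j : ℝ) := by exact_mod_cast hj1
      have hjx : (j : ℝ) ≤ x := by
        have h1'' : (m : ℝ) - 1 < x := by linarith
        have hjm : (j : ℝ) = (m : ℝ) - 1 := by rw [← hjcast]; ring
        linarith
      have hratio1 : φ (s ((j : ℝ) + 1)) / s ((j : ℝ) + 1) ≤ C * (φ (s (j : ℝ)) / s (j : ℝ)) :=
        h4' j hj1
      rw [hjcast] at hratio1
      have hsj : s x ≤ s (j : ℝ) := santi (Set.mem_Ici.mpr hjR) (Set.mem_Ici.mpr hx) hjx
      have hratio2 : φ (s (j : ℝ)) / s (j : ℝ) ≤ φ (s x) / s x :=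
        conc_ratio hφ.concave hφ.zero hsxpos hsj (hmap _ hjR).2
      have hψm : ψ (m : ℝ) ≤ 2 * ψ x := by
        have h1'' : ψ (m : ℝ) ≤ ψ (2 * x) := by
          apply hψ.mono (Set.mem_Ici.mpr (by linarith)) (Set.mem_Ici.mpr (by linarith))
          linarith
        linarith [psi_doubling hψ.concave hψ.zero (by linarith : (0:ℝ) ≤ x)]
      have e1 : φ (s (m:ℝ)) / s (m:ℝ) ≤ C * (φ (s x) / s x) :=
        le_trans hratio1 (mul_le_mul_of_nonneg_left hratio2 hC.le)
      have h0m : 0 ≤ φ (s (m:ℝ)) / s (m:ℝ) :=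
        div_nonneg (hφpos (m:ℝ) hmR).le (hspos (m:ℝ) hmR).le
      have h0ψm : 0 ≤ ψ (m:ℝ) := (hψpos (m:ℝ) hmR).le
      have hkey : s x * (φ (s (m:ℝ)) / s (m:ℝ)) * ψ (m:ℝ)
          ≤ s x * (C * (φ (s x) / s x)) * (2 * ψ x) := by
        apply mul_le_mul (mul_le_mul_of_nonneg_left e1 hsxpos.le) hψm h0ψm
        exact mul_nonneg hsxpos.le
          (mul_nonneg hC.le (div_nonneg (hφpos x hx).le hsxpos.le))
      have hid2 : s x * (C * (φ (s x) / s x)) * (2 * ψ x) = 2 * C * (φ (s x) * ψ x) := by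
        field_simp
      rw [hid2] at hkey
      have hh := mul_le_mul_of_nonneg_right (le_max_right (1:ℝ) (2 * C)) hprodpos.le
      linarith
end
end

section
/- For every integer $N\ge 2$ there exist pairwise disjoint measurable sets $A_1,\dots,A_{2N}\subset[0,1]$ of positive measure such that the simple function $f=\sum_{j=1}^{2N}a_j\chi_{A_j}$ with coefficients $a_j=1/(2N\,\varphi(\lambda(A_j)))$ satisfies $\|f\|_{\varphi,\psi}\ge \frac{2^c-1}{8}\,\psi(N)$. -/
open MeasureTheory ENNReal Set Filter Topology

noncomputable section

/-!
Pick scales `t₀ > t₁ > ⋯` so sparse that, for a small ratio `q`, both `t ^ c` decays and the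
slope `φ t / t` grows geometrically, and let `A j` be disjoint intervals of length `t j`.
A piece `g` with `‖g‖_∞ = h` and `‖g‖₁ = h r` carries at most `h · min r (t j)` on `A j`,
while `f` needs `t j / (2N φ (t j))` there. Concavity of `φ` above the scale of `r` and the
regularity of `φ t / t ^ c` below it show that `g` covers at most the fraction
`2N q ^ d · h φ(r)` of `A j`, where `d` is the distance from `j` to the scale of `r`.
Every block is covered, so summing over a set of blocks, `N ≤ ∑ₙ 2N (∑ⱼ q ^ dₙⱼ) hₙ φ(rₙ)`.
A piece `n ≥ N/2` pays for `∑ⱼ q ^ dₙⱼ ≤ 2 / (1 - q)` with `ψ(n+1) ≥ ψ(N)/2`; for a cheap piece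
`n < N/2` the sum is `O(q)` once the two blocks next to its scale are discarded, which still
leaves `N` of the `2N` blocks.
-/
instance isProbabilityMeasure_μ01 : IsProbabilityMeasure μ01 :=
  ⟨by rw [μ01, Measure.restrict_apply_univ, Real.volume_Icc]; norm_num⟩

section SetLIntegral

variable {α : Type*} [MeasurableSpace α] {μ : Measure α} {g : α → ℝ}

lemma setLIntegral_ofReal_le_eLpNorm_one (A : Set α) :
    ∫⁻ x in A, ENNReal.ofReal (g x) ∂μ ≤ eLpNorm g 1 μ :=
  calc ∫⁻ x in A, ENNReal.ofReal (g x) ∂μ ≤ ∫⁻ x, ENNReal.ofReal (g x) ∂μ :=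
        setLIntegral_le_lintegral A _
    _ ≤ ∫⁻ x, ‖g x‖ₑ ∂μ := lintegral_mono fun x => Real.ofReal_le_enorm (g x)
    _ = eLpNorm g 1 μ := eLpNorm_one_eq_lintegral_enorm.symm

lemma setLIntegral_ofReal_le_eLpNorm_top_mul (A : Set α) :
    ∫⁻ x in A, ENNReal.ofReal (g x) ∂μ ≤ eLpNorm g ⊤ μ * μ A := by
  have hbound : ∀ᵐ x ∂μ, ENNReal.ofReal (g x) ≤ eLpNorm g ⊤ μ := by
    filter_upwards [ae_le_eLpNormEssSup (f := g) (μ := μ)] with x hx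
    exact (Real.ofReal_le_enorm (g x)).trans (by rwa [eLpNorm_exponent_top])
  calc ∫⁻ x in A, ENNReal.ofReal (g x) ∂μ ≤ ∫⁻ _ in A, eLpNorm g ⊤ μ ∂μ :=
        lintegral_mono_ae (ae_restrict_of_ae hbound)
    _ = eLpNorm g ⊤ μ * μ A := setLIntegral_const A _

lemma eLpNorm_one_le_eLpNorm_top [IsProbabilityMeasure μ] : eLpNorm g 1 μ ≤ eLpNorm g ⊤ μ :=
  calc eLpNorm g 1 μ = ∫⁻ x, ‖g x‖ₑ ∂μ := eLpNorm_one_eq_lintegral_enorm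
    _ ≤ ∫⁻ _, eLpNorm g ⊤ μ ∂μ :=
        lintegral_mono_ae (by simpa [eLpNorm_exponent_top] using ae_le_eLpNormEssSup)
    _ = eLpNorm g ⊤ μ := by simp

lemma toReal_eLpNorm_one_div_eLpNorm_top_le_one [IsProbabilityMeasure μ] :
    (eLpNorm g 1 μ / eLpNorm g ⊤ μ).toReal ≤ 1 := by
  have h : eLpNorm g 1 μ / eLpNorm g ⊤ μ ≤ 1 :=
    ENNReal.div_le_of_le_mul (by simpa using eLpNorm_one_le_eLpNorm_top)
  simpa using ENNReal.toReal_mono one_ne_top h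

lemma setLIntegral_ofReal_le_mul_min [IsProbabilityMeasure μ] (hg : eLpNorm g ⊤ μ ≠ ⊤)
    (A : Set α) :
    ∫⁻ x in A, ENNReal.ofReal (g x) ∂μ ≤ ENNReal.ofReal ((eLpNorm g ⊤ μ).toReal *
      min (eLpNorm g 1 μ / eLpNorm g ⊤ μ).toReal (μ A).toReal) := by
  set H := eLpNorm g ⊤ μ
  set L := eLpNorm g 1 μ
  have hLH : L ≤ H := eLpNorm_one_le_eLpNorm_top
  have hratio : L / H ≠ ⊤ :=
    ne_top_of_le_ne_top one_ne_top (ENNReal.div_le_of_le_mul (by simpa using hLH))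
  have hcancel : L ≤ H * (L / H) := by
    rcases eq_or_ne H 0 with hH | hH
    · simpa [hH] using hLH
    · rw [ENNReal.mul_div_cancel hH hg]
  rw [ENNReal.ofReal_mul toReal_nonneg, ENNReal.ofReal_toReal hg, ENNReal.ofReal_min,
    ENNReal.ofReal_toReal hratio, ENNReal.ofReal_toReal (measure_ne_top μ A),
    mul_min_of_nonneg _ _ zero_le]
  exact le_min ((setLIntegral_ofReal_le_eLpNorm_one A).trans hcancel)
    (setLIntegral_ofReal_le_eLpNorm_top_mul A)

end SetLIntegral

lemma ConcaveOn.div_le_div_of_le {s : Set ℝ} {f : ℝ → ℝ} (hf : ConcaveOn ℝ s f) (h0 : (0 : ℝ) ∈ s)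
    (hf0 : f 0 = 0) {x y : ℝ} (hx : x ∈ s) (hy : y ∈ s) (hx0 : 0 < x) (hxy : x ≤ y) :
    f y / y ≤ f x / x := by
  have := hf.neg.secant_mono h0 hx hy hx0.ne' (hx0.trans_le hxy).ne' hxy
  simpa [hf0, neg_div] using this

lemma IsPsi.le_two_mul {ψ : ℝ → ℝ} (hψ : IsPsi ψ) {x : ℝ} (hx : 0 ≤ x) : ψ (2 * x) ≤ 2 * ψ x := by
  rcases hx.eq_or_lt with rfl | hx
  · simp [hψ.zero]
  have := hψ.concave.div_le_div_of_le (y := 2 * x) self_mem_Ici hψ.zero hx.le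
    (by simp only [mem_Ici]; positivity) hx (by linarith)
  rw [div_le_div_iff₀ (by positivity) hx] at this
  nlinarith

lemma exists_seq_succ_le_mul_of_tendsto {s : ℝ → ℝ} (hs : Tendsto s (𝓝[>] 0) atTop)
    {x₀ r Q : ℝ} (hx₀ : 0 < x₀) (hr : 0 < r) (hQ : 0 < Q) :
    ∃ t : ℕ → ℝ, t 0 = x₀ ∧ ∀ k, 0 < t k ∧ t (k + 1) ≤ r * t k ∧ s (t k) ≤ Q * s (t (k + 1)) := by
  have step : ∀ x : Ioi (0 : ℝ), ∃ y : Ioi (0 : ℝ), (y : ℝ) ≤ r * x ∧ s x ≤ Q * s y := by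
    intro x
    have hsmall : ∀ᶠ y in 𝓝[>] (0 : ℝ), y ∈ Ioo 0 (r * x) :=
      Ioo_mem_nhdsGT (mul_pos hr x.2)
    obtain ⟨y, hy, hsy⟩ := (hsmall.and (hs.eventually_ge_atTop (s x / Q))).exists
    exact ⟨⟨y, hy.1⟩, hy.2.le, by rwa [div_le_iff₀' hQ] at hsy⟩
  choose F hF using step
  refine ⟨fun k => F^[k] ⟨x₀, hx₀⟩, rfl, fun k => ⟨(F^[k] _).2, ?_⟩⟩
  simp only [Function.iterate_succ_apply']
  exact hF _

structure IsLacunaryScales (φ : ℝ → ℝ) (c p q : ℝ) (t : ℕ → ℝ) : Prop where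
  pos : ∀ k, 0 < t k
  le : ∀ k, t k ≤ p
  antitone : Antitone t
  sum_range_le_one : ∀ K, ∑ k ∈ Finset.range K, t k ≤ 1
  rpow_succ_le : ∀ k, t (k + 1) ^ c ≤ q * t k ^ c
  slope_le : ∀ k, φ (t k) / t k ≤ q * (φ (t (k + 1)) / t (k + 1))

lemma exists_isLacunaryScales {φ : ℝ → ℝ} (hφ : Tendsto (fun t => φ t / t) (𝓝[>] 0) atTop)
    {c p q : ℝ} (hc : 0 < c) (hp : 0 < p) (hq : 0 < q) : ∃ t, IsLacunaryScales φ c p q t := by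
  obtain ⟨t, ht0, ht⟩ := exists_seq_succ_le_mul_of_tendsto hφ (lt_min hp one_half_pos)
    (lt_min (Real.rpow_pos_of_pos hq c⁻¹) one_half_pos) hq
  set r := min (q ^ c⁻¹) (1 / 2)
  have hhalf : ∀ k, t (k + 1) ≤ 1 / 2 * t k := fun k =>
    (ht k).2.1.trans (mul_le_mul_of_nonneg_right (min_le_right _ _) (ht k).1.le)
  have hgeom : ∀ k, t k ≤ (1 / 2) ^ k * min p (1 / 2) := fun k => by
    simpa [ht0] using le_geom (by norm_num) k fun k _ => hhalf k
  have hanti : Antitone t :=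
    antitone_nat_of_succ_le fun k => (hhalf k).trans (by linarith [(ht k).1])
  refine ⟨t, fun k => (ht k).1, fun k => (hanti k.zero_le).trans (ht0 ▸ min_le_left _ _), hanti,
    fun K => ?_, fun k => ?_, fun k => (ht k).2.2⟩
  · calc ∑ k ∈ Finset.range K, t k ≤ ∑ k ∈ Finset.range K, (1 / 2) ^ k * (1 / 2 : ℝ) :=
          Finset.sum_le_sum fun k _ => (hgeom k).trans (by gcongr; exact min_le_right _ _)
      _ = (∑ k ∈ Finset.range K, (1 / 2 : ℝ) ^ k) * (1 / 2) := (Finset.sum_mul ..).symm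
      _ ≤ 2 * (1 / 2) := by gcongr; exact sum_geometric_two_le K
      _ = 1 := by norm_num
  · have hr : r ^ c ≤ q := by
      calc r ^ c ≤ (q ^ c⁻¹) ^ c :=
            Real.rpow_le_rpow (by positivity) (min_le_left _ _) hc.le
        _ = q := Real.rpow_inv_rpow hq.le hc.ne'
    calc t (k + 1) ^ c ≤ (r * t k) ^ c :=
          Real.rpow_le_rpow (ht (k + 1)).1.le (ht k).2.1 hc.le
      _ = r ^ c * t k ^ c := Real.mul_rpow (by positivity) (ht k).1.le
      _ ≤ q * t k ^ c := mul_le_mul_of_nonneg_right hr (Real.rpow_nonneg (ht k).1.le c)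

def scaleIndex (t : ℕ → ℝ) (ρ : ℝ) : ℕ := sInf {k | t k ≤ ρ}

lemma lt_of_lt_scaleIndex {t : ℕ → ℝ} {ρ : ℝ} {k : ℕ} (hk : k < scaleIndex t ρ) : ρ < t k :=
  not_le.1 (Nat.notMem_of_lt_sInf hk)

/-- The distance from `j` to `{J - 1, J}`. -/
def scaleGap (J j : ℕ) : ℕ := if j < J then J - 1 - j else j - J

lemma one_le_scaleGap {J j : ℕ} (h₁ : j ≠ J - 1) (h₂ : j ≠ J) : 1 ≤ scaleGap J j := by
  unfold scaleGap
  split_ifs <;> omega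

namespace IsLacunaryScales

variable {φ : ℝ → ℝ} {c p q : ℝ} {t : ℕ → ℝ} (ht : IsLacunaryScales φ c p q t)
include ht

lemma exists_le {ρ : ℝ} (hρ : 0 < ρ) : ∃ k, t k ≤ ρ := by
  by_contra! h
  obtain ⟨K, hK⟩ := exists_nat_gt ρ⁻¹
  have : K * ρ ≤ 1 := by
    simpa using (Finset.sum_le_sum fun k _ => (h k).le).trans (ht.sum_range_le_one K)
  rw [inv_lt_iff_one_lt_mul₀ hρ] at hK
  linarith

lemma le_one (k : ℕ) : t k ≤ 1 :=
  (Finset.single_le_sum (fun i _ => (ht.pos i).le) (Finset.self_mem_range_succ k)).trans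
    (ht.sum_range_le_one (k + 1))

lemma scaleIndex_le {ρ : ℝ} (hρ : 0 < ρ) : t (scaleIndex t ρ) ≤ ρ :=
  Nat.sInf_mem (ht.exists_le hρ)

lemma rpow_le_pow_mul (hq : 0 ≤ q) (i d : ℕ) : t (i + d) ^ c ≤ q ^ d * t i ^ c :=
  le_geom (u := fun k => t (i + k) ^ c) hq d fun k _ => ht.rpow_succ_le (i + k)

lemma slope_le_pow_mul (hq : 0 ≤ q) (i d : ℕ) :
    φ (t i) / t i ≤ q ^ d * (φ (t (i + d)) / t (i + d)) := by
  induction d with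
  | zero => simp
  | succ d ih =>
    calc φ (t i) / t i ≤ q ^ d * (φ (t (i + d)) / t (i + d)) := ih
      _ ≤ q ^ d * (q * (φ (t (i + d + 1)) / t (i + d + 1))) := by
          gcongr
          exact ht.slope_le (i + d)
      _ = q ^ (d + 1) * (φ (t (i + (d + 1))) / t (i + (d + 1))) := by ring_nf

lemma mul_slope_le_of_lt_scaleIndex (hφ : IsPhi φ) (hq : 0 ≤ q) {r : ℝ} (hr : 0 < r)
    {j : ℕ} (hj : j < scaleIndex t (min r p)) :
    r * (φ (t j) / t j) ≤ q ^ (scaleIndex t (min r p) - 1 - j) * φ r := by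
  set J := scaleIndex t (min r p)
  have hrJ : r ≤ t (J - 1) := by
    rcases min_lt_iff.1 (lt_of_lt_scaleIndex (show J - 1 < J by omega)) with h | h
    · exact h.le
    · exact absurd (ht.le _) h.not_ge
  calc r * (φ (t j) / t j) ≤ r * (q ^ (J - 1 - j) * (φ (t (J - 1)) / t (J - 1))) := by
        gcongr
        simpa [show j + (J - 1 - j) = J - 1 by omega] using ht.slope_le_pow_mul hq j (J - 1 - j)
    _ ≤ r * (q ^ (J - 1 - j) * (φ r / r)) := by
        have := hφ.concave.div_le_div_of_le (by simp) hφ.zero ⟨hr.le, hrJ.trans (ht.le_one _)⟩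
          ⟨(ht.pos _).le, ht.le_one _⟩ hr hrJ
        gcongr
    _ = q ^ (J - 1 - j) * φ r := by field_simp

lemma le_pow_mul_of_scaleIndex_le (hφ : IsPhi φ) (hc : 0 < c)
    (hreg : MonotoneOn (fun t => φ t / t ^ c) (Ioc 0 p)) (hq : 0 ≤ q) {r : ℝ} (hr : 0 < r)
    (hr1 : r ≤ 1) {j : ℕ} (hj : scaleIndex t (min r p) ≤ j) :
    φ (t j) ≤ q ^ (j - scaleIndex t (min r p)) * φ r := by
  set J := scaleIndex t (min r p)
  set ρ := min r p
  have hρ : 0 < ρ := lt_min hr (ht.pos 0 |>.trans_le (ht.le 0))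
  have hρr : ρ ≤ r := min_le_left _ _
  have htJ : t J ≤ ρ := ht.scaleIndex_le hρ
  have hreg' : φ (t j) / t j ^ c ≤ φ ρ / ρ ^ c :=
    hreg ⟨ht.pos j, ht.le j⟩ ⟨hρ, min_le_right _ _⟩ ((ht.antitone hj).trans htJ)
  have hdecay : t j ^ c ≤ q ^ (j - J) * ρ ^ c :=
    calc t j ^ c = t (J + (j - J)) ^ c := by rw [Nat.add_sub_cancel' hj]
      _ ≤ q ^ (j - J) * t J ^ c := ht.rpow_le_pow_mul hq J (j - J)
      _ ≤ q ^ (j - J) * ρ ^ c := by have := (ht.pos J).le; gcongr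
  calc φ (t j) = φ (t j) / t j ^ c * t j ^ c := by
        rw [div_mul_cancel₀ _ (Real.rpow_pos_of_pos (ht.pos j) c).ne']
    _ ≤ φ ρ / ρ ^ c * (q ^ (j - J) * ρ ^ c) := by
        have := Real.rpow_nonneg (ht.pos j).le c
        have := hφ.pos ρ hρ (hρr.trans hr1)
        gcongr
    _ = q ^ (j - J) * φ ρ := by field_simp
    _ ≤ q ^ (j - J) * φ r := by
        gcongr
        exact hφ.mono ⟨hρ.le, hρr.trans hr1⟩ ⟨hr.le, hr1⟩ hρr

/-- For `r = ‖g‖₁/‖g‖_∞`, the mass of `g` on a block of length `t j` is at most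
`‖g‖_∞ · min r (t j)`; measured against `φ`, it decays geometrically in the distance between
`j` and the scale of `r`. -/
lemma min_mul_slope_le (hφ : IsPhi φ) (hc : 0 < c)
    (hreg : MonotoneOn (fun t => φ t / t ^ c) (Ioc 0 p)) (hq : 0 ≤ q) {r : ℝ} (hr0 : 0 ≤ r)
    (hr1 : r ≤ 1) (j : ℕ) :
    min r (t j) * (φ (t j) / t j) ≤ q ^ scaleGap (scaleIndex t (min r p)) j * φ r := by
  rcases hr0.eq_or_lt with rfl | hr
  · simp [(ht.pos j).le, hφ.zero]
  have hslope : 0 ≤ φ (t j) / t j := (div_pos (hφ.pos _ (ht.pos j) (ht.le_one j)) (ht.pos j)).le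
  unfold scaleGap
  split_ifs with hj
  · calc min r (t j) * (φ (t j) / t j) ≤ r * (φ (t j) / t j) := by gcongr; exact min_le_left _ _
      _ ≤ _ := ht.mul_slope_le_of_lt_scaleIndex hφ hq hr hj
  · calc min r (t j) * (φ (t j) / t j) ≤ t j * (φ (t j) / t j) := by gcongr; exact min_le_right _ _
      _ = φ (t j) := mul_div_cancel₀ _ (ht.pos j).ne'
      _ ≤ _ := ht.le_pow_mul_of_scaleIndex_le hφ hc hreg hq hr hr1 (not_lt.1 hj)

end IsLacunaryScales

lemma sum_pow_le_of_injOn {ι : Type*} {q : ℝ} (hq0 : 0 ≤ q) (hq1 : q < 1) {s : Finset ι}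
    {e : ι → ℕ} (he : Set.InjOn e s) {k : ℕ} (hk : ∀ i ∈ s, k ≤ e i) :
    ∑ i ∈ s, q ^ e i ≤ q ^ k * (1 - q)⁻¹ := by
  have hinj : Set.InjOn (fun i => e i - k) s := fun x hx y hy hxy =>
    he hx hy (by have := hk x hx; have := hk y hy; simp only at hxy; omega)
  calc ∑ i ∈ s, q ^ e i = ∑ i ∈ s, q ^ k * q ^ (e i - k) :=
        Finset.sum_congr rfl fun i hi => by rw [← pow_add, Nat.add_sub_cancel' (hk i hi)]
    _ = q ^ k * ∑ d ∈ s.image (fun i => e i - k), q ^ d := by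
        rw [Finset.sum_image hinj, Finset.mul_sum]
    _ ≤ q ^ k * ∑' d, q ^ d := by
        gcongr
        exact (summable_geometric_of_lt_one hq0 hq1).sum_le_tsum _ fun _ _ => pow_nonneg hq0 _
    _ = q ^ k * (1 - q)⁻¹ := by rw [tsum_geometric_of_lt_one hq0 hq1]

lemma sum_pow_scaleGap_le {q : ℝ} (hq0 : 0 ≤ q) (hq1 : q < 1) (J k : ℕ) {s : Finset ℕ}
    (hk : ∀ j ∈ s, k ≤ scaleGap J j) :
    ∑ j ∈ s, q ^ scaleGap J j ≤ 2 * (q ^ k * (1 - q)⁻¹) := by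
  rw [← Finset.sum_filter_add_sum_filter_not s (· < J), two_mul]
  gcongr <;>
  refine sum_pow_le_of_injOn hq0 hq1 (fun x hx y hy hxy => ?_) fun j hj =>
    hk j (Finset.mem_filter.1 hj).1 <;>
  simp only [Finset.coe_filter, Set.mem_ofPred_eq, scaleGap] at hx hy hxy <;>
  split_ifs at hxy <;> omega

lemma exists_finset_one_le_scaleGap (N : ℕ) (J : ℕ → ℕ) :
    ∃ S : Finset ℕ, S ⊆ Finset.range (2 * N) ∧ N ≤ S.card ∧
      ∀ n < N / 2, ∀ j ∈ S, 1 ≤ scaleGap (J n) j := by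
  set Bad := (Finset.range (N / 2)).biUnion fun n => {J n - 1, J n}
  refine ⟨Finset.range (2 * N) \ Bad, Finset.sdiff_subset, ?_, fun n hn j hj => ?_⟩
  · have hBad : Bad.card ≤ 2 * (N / 2) :=
      calc Bad.card ≤ ∑ n ∈ Finset.range (N / 2), ({J n - 1, J n} : Finset ℕ).card :=
            Finset.card_biUnion_le
        _ ≤ ∑ n ∈ Finset.range (N / 2), 2 :=
            Finset.sum_le_sum fun n _ => Finset.card_le_two
        _ = 2 * (N / 2) := by simp [mul_comm]
    have := Finset.le_card_sdiff Bad (Finset.range (2 * N))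
    rw [Finset.card_range] at this
    omega
  · have hj' : j ∉ ({J n - 1, J n} : Finset ℕ) := fun h =>
      (Finset.mem_sdiff.1 hj).2 (Finset.mem_biUnion.2 ⟨n, Finset.mem_range.2 hn, h⟩)
    simp only [Finset.mem_insert, Finset.mem_singleton, not_or] at hj'
    exact one_le_scaleGap hj'.1 hj'.2

lemma sum_pow_scaleGap_le_mul_psi {ψ : ℝ → ℝ} (hψ : IsPsi ψ) {q κ : ℝ} (hq0 : 0 ≤ q)
    (hq2 : q ≤ 1 / 2) (hqκ : q ≤ 1 - κ) (hκ : 0 < κ) {N : ℕ} (hN : 0 < N)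
    (hqψ : q * (κ * ψ N) ≤ ψ 1) (J : ℕ → ℕ) {S : Finset ℕ}
    (hS : ∀ n < N / 2, ∀ j ∈ S, 1 ≤ scaleGap (J n) j) (n : ℕ) :
    ∑ j ∈ S, q ^ scaleGap (J n) j ≤ 4 / (κ * ψ N) * ψ (n + 1) := by
  have hq1 : q < 1 := by linarith
  have hψN : 0 < ψ N := hψ.pos N (by exact_mod_cast hN)
  have hmono : ∀ {x y : ℝ}, 0 ≤ x → x ≤ y → ψ x ≤ ψ y := fun hx hxy =>
    hψ.mono hx (hx.trans hxy) hxy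
  by_cases hn : n < N / 2
  · calc ∑ j ∈ S, q ^ scaleGap (J n) j ≤ 2 * (q ^ 1 * (1 - q)⁻¹) :=
          sum_pow_scaleGap_le hq0 hq1 (J n) 1 (hS n hn)
      _ ≤ 4 / (κ * ψ N) * ψ 1 := by
          rw [div_mul_eq_mul_div, le_div_iff₀ (by positivity), pow_one]
          have : (1 - q)⁻¹ ≤ 2 := by rw [inv_le_comm₀ (by linarith) two_pos]; linarith
          calc 2 * (q * (1 - q)⁻¹) * (κ * ψ N) = 2 * (1 - q)⁻¹ * (q * (κ * ψ N)) := by ring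
            _ ≤ 2 * 2 * ψ 1 := by gcongr
            _ = 4 * ψ 1 := by norm_num
      _ ≤ 4 / (κ * ψ N) * ψ (n + 1) := by gcongr; exact hmono zero_le_one (by simp)
  · have hψn : ψ N ≤ 2 * ψ (n + 1) :=
      calc ψ N ≤ ψ (2 * (n + 1)) := hmono (Nat.cast_nonneg N) (by norm_cast; omega)
        _ ≤ 2 * ψ (n + 1) := hψ.le_two_mul (by positivity)
    calc ∑ j ∈ S, q ^ scaleGap (J n) j ≤ 2 * (q ^ 0 * (1 - q)⁻¹) :=
          sum_pow_scaleGap_le hq0 hq1 (J n) 0 fun _ _ => Nat.zero_le _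
      _ ≤ 2 * κ⁻¹ := by rw [pow_zero, one_mul]; gcongr; linarith
      _ = 4 / (κ * ψ N) * (ψ N / 2) := by field_simp; ring
      _ ≤ 4 / (κ * ψ N) * ψ (n + 1) := by gcongr; linarith

lemma card_le_mul_tsum {ι : Type*} (S : Finset ι) (β : ι → ℕ → ℝ≥0∞) (v w : ℕ → ℝ≥0∞)
    {K : ℝ≥0∞} (hcover : ∀ j ∈ S, 1 ≤ ∑' n, β j n * w n)
    (hβ : ∀ n, ∑ j ∈ S, β j n ≤ K * v n) :
    (S.card : ℝ≥0∞) ≤ K * ∑' n, v n * w n :=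
  calc (S.card : ℝ≥0∞) = ∑ _j ∈ S, 1 := by simp
    _ ≤ ∑ j ∈ S, ∑' n, β j n * w n := Finset.sum_le_sum hcover
    _ = ∑' n, (∑ j ∈ S, β j n) * w n := by
        simp_rw [Finset.sum_mul]
        exact (Summable.tsum_finsetSum fun _ _ => ENNReal.summable).symm
    _ ≤ ∑' n, K * v n * w n := ENNReal.tsum_le_tsum fun n => by gcongr; exact hβ n
    _ = K * ∑' n, v n * w n := by simp_rw [mul_assoc]; exact ENNReal.tsum_mul_left

def linftyNorm (g : ℝ → ℝ) : ℝ := (eLpNorm g ⊤ μ01).toReal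

def normRatio (g : ℝ → ℝ) : ℝ := (eLpNorm g 1 μ01 / eLpNorm g ⊤ μ01).toReal

lemma normRatio_le_one (g : ℝ → ℝ) : normRatio g ≤ 1 := toReal_eLpNorm_one_div_eLpNorm_top_le_one

namespace Admissible

variable {f : ℝ → ℝ} {g : ℕ → ℝ → ℝ} (hg : Admissible f g)
include hg

lemma ofReal_mul_le_tsum_setLIntegral {A : Set ℝ} (hA : MeasurableSet A) {a : ℝ}
    (haf : ∀ x ∈ A, a ≤ |f x|) :
    ENNReal.ofReal a * μ01 A ≤ ∑' n, ∫⁻ x in A, ENNReal.ofReal (g n x) ∂μ01 :=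
  calc ENNReal.ofReal a * μ01 A = ∫⁻ _ in A, ENNReal.ofReal a ∂μ01 := (setLIntegral_const A _).symm
    _ ≤ ∫⁻ x in A, ENNReal.ofReal |f x| ∂μ01 :=
        setLIntegral_mono' hA fun x hx => ENNReal.ofReal_le_ofReal (haf x hx)
    _ ≤ ∫⁻ x in A, ∑' n, ENNReal.ofReal (g n x) ∂μ01 :=
        lintegral_mono_ae (ae_restrict_of_ae hg.2.2.2)
    _ = ∑' n, ∫⁻ x in A, ENNReal.ofReal (g n x) ∂μ01 :=
        lintegral_tsum fun n => (hg.1 n).ennreal_ofReal.restrict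

lemma one_le_tsum {φ : ℝ → ℝ} {A : Set ℝ} (hA : MeasurableSet A) {τ a : ℝ} (hτ : 0 < τ)
    (ha : 0 < a) (hAμ : μ01 A = ENNReal.ofReal τ) (haf : ∀ x ∈ A, a ≤ |f x|) {γ : ℕ → ℝ}
    (hγ0 : ∀ n, 0 ≤ γ n) (hγ : ∀ n, min (normRatio (g n)) τ ≤ a * τ * (γ n * φ (normRatio (g n)))) :
    1 ≤ ∑' n, ENNReal.ofReal (γ n) * ENNReal.ofReal (linftyNorm (g n) * φ (normRatio (g n))) := by
  have hpiece : ∀ n, ∫⁻ x in A, ENNReal.ofReal (g n x) ∂μ01 ≤ ENNReal.ofReal (a * τ) *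
      (ENNReal.ofReal (γ n) * ENNReal.ofReal (linftyNorm (g n) * φ (normRatio (g n)))) := by
    intro n
    calc ∫⁻ x in A, ENNReal.ofReal (g n x) ∂μ01
        ≤ ENNReal.ofReal (linftyNorm (g n) * min (normRatio (g n)) τ) := by
          have := setLIntegral_ofReal_le_mul_min (hg.2.1 n).ne A
          rwa [hAμ, ENNReal.toReal_ofReal hτ.le] at this
      _ ≤ ENNReal.ofReal (a * τ * (γ n * (linftyNorm (g n) * φ (normRatio (g n))))) := by
          refine ENNReal.ofReal_le_ofReal ?_
          calc linftyNorm (g n) * min (normRatio (g n)) τ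
              ≤ linftyNorm (g n) * (a * τ * (γ n * φ (normRatio (g n)))) :=
                mul_le_mul_of_nonneg_left (hγ n) toReal_nonneg
            _ = _ := by ring
      _ = _ := by rw [ENNReal.ofReal_mul (by positivity), ENNReal.ofReal_mul (hγ0 n)]
  have haτ : ENNReal.ofReal (a * τ) ≠ 0 := by simpa using mul_pos ha hτ
  rw [← ENNReal.mul_le_mul_iff_right haτ ofReal_ne_top, mul_one, ← ENNReal.tsum_mul_left]
  calc ENNReal.ofReal (a * τ) = ENNReal.ofReal a * μ01 A := by rw [hAμ, ENNReal.ofReal_mul ha.le]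
    _ ≤ ∑' n, ∫⁻ x in A, ENNReal.ofReal (g n x) ∂μ01 := hg.ofReal_mul_le_tsum_setLIntegral hA haf
    _ ≤ _ := ENNReal.tsum_le_tsum hpiece

end Admissible

lemma IsLacunaryScales.one_le_tsum {φ : ℝ → ℝ} {c p q : ℝ} {t : ℕ → ℝ}
    (ht : IsLacunaryScales φ c p q t) (hφ : IsPhi φ) (hc : 0 < c)
    (hreg : MonotoneOn (fun t => φ t / t ^ c) (Ioc 0 p)) (hq0 : 0 ≤ q) {A : Set ℝ}
    (hA : MeasurableSet A) {j : ℕ} (hAμ : μ01 A = ENNReal.ofReal (t j)) {M : ℝ} (hM : 0 < M)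
    {f : ℝ → ℝ} (hf : ∀ x ∈ A, 1 / (M * φ (t j)) ≤ |f x|) {g : ℕ → ℝ → ℝ} (hg : Admissible f g) :
    1 ≤ ∑' n, ENNReal.ofReal (M * q ^ scaleGap (scaleIndex t (min (normRatio (g n)) p)) j) *
      ENNReal.ofReal (linftyNorm (g n) * φ (normRatio (g n))) := by
  have hφt : 0 < φ (t j) := hφ.pos _ (ht.pos j) (ht.le_one j)
  refine hg.one_le_tsum hA (ht.pos j) (by positivity) hAμ hf (fun n => by positivity) fun n => ?_
  have hkey := ht.min_mul_slope_le hφ hc hreg hq0 (r := normRatio (g n)) toReal_nonneg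
    (normRatio_le_one (g n)) j
  have hcancel : φ (t j) / t j * (t j / φ (t j)) = 1 := by
    field_simp [(ht.pos j).ne', hφt.ne']
  calc min (normRatio (g n)) (t j)
      = min (normRatio (g n)) (t j) * (φ (t j) / t j) * (t j / φ (t j)) := by
        rw [mul_assoc, hcancel, mul_one]
    _ ≤ q ^ scaleGap (scaleIndex t (min (normRatio (g n)) p)) j * φ (normRatio (g n)) *
        (t j / φ (t j)) := mul_le_mul_of_nonneg_right hkey (div_pos (ht.pos j) hφt).le
    _ = _ := by field_simp

lemma ofReal_le_seqCost_of_isLacunaryScales {φ ψ : ℝ → ℝ} (hφ : IsPhi φ) (hψ : IsPsi ψ)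
    {c p q κ : ℝ} (hc : 0 < c) (hreg : MonotoneOn (fun t => φ t / t ^ c) (Ioc 0 p)) {t : ℕ → ℝ}
    (ht : IsLacunaryScales φ c p q t) (hq0 : 0 ≤ q) (hq2 : q ≤ 1 / 2) (hqκ : q ≤ 1 - κ)
    (hκ : 0 < κ) {N : ℕ} (hN : 0 < N) (hqψ : q * (κ * ψ N) ≤ ψ 1) {A : ℕ → Set ℝ}
    (hA : ∀ j, MeasurableSet (A j)) (hAμ : ∀ j, μ01 (A j) = ENNReal.ofReal (t j)) {f : ℝ → ℝ}
    (hf : ∀ j < 2 * N, ∀ x ∈ A j, 1 / (2 * N * φ (t j)) ≤ |f x|) {g : ℕ → ℝ → ℝ}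
    (hg : Admissible f g) :
    ENNReal.ofReal (κ / 8 * ψ N) ≤ seqCost φ ψ g := by
  have hψN : 0 < ψ N := hψ.pos N (by exact_mod_cast hN)
  set J : ℕ → ℕ := fun n => scaleIndex t (min (normRatio (g n)) p)
  obtain ⟨S, hS2N, hSN, hSgap⟩ := exists_finset_one_le_scaleGap N J
  set K : ℝ := 2 * N * (4 / (κ * ψ N))
  have hcover : ∀ j ∈ S, 1 ≤ ∑' n : ℕ, ENNReal.ofReal (2 * N * q ^ scaleGap (J n) j) *
      ENNReal.ofReal (linftyNorm (g n) * φ (normRatio (g n))) := fun j hj =>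
    ht.one_le_tsum hφ hc hreg hq0 (hA j) (hAμ j) (by positivity)
      (hf j (Finset.mem_range.1 (hS2N hj))) hg
  have hweight : ∀ n, ∑ j ∈ S, ENNReal.ofReal (2 * N * q ^ scaleGap (J n) j) ≤
      ENNReal.ofReal K * ENNReal.ofReal (ψ (n + 1)) := by
    intro n
    rw [← ENNReal.ofReal_sum_of_nonneg fun j _ => by positivity,
      ← ENNReal.ofReal_mul (by positivity)]
    refine ENNReal.ofReal_le_ofReal ?_
    calc ∑ j ∈ S, 2 * N * q ^ scaleGap (J n) j = 2 * N * ∑ j ∈ S, q ^ scaleGap (J n) j :=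
          (Finset.mul_sum ..).symm
      _ ≤ 2 * N * (4 / (κ * ψ N) * ψ (n + 1)) := by
          gcongr
          exact sum_pow_scaleGap_le_mul_psi hψ hq0 hq2 hqκ hκ hN hqψ J hSgap n
      _ = K * ψ (n + 1) := by ring
  have hcount := card_le_mul_tsum S _ _ _ hcover hweight
  have hcost : ∑' n : ℕ, ENNReal.ofReal (ψ (n + 1)) *
      ENNReal.ofReal (linftyNorm (g n) * φ (normRatio (g n))) = seqCost φ ψ g :=
    tsum_congr fun n => by
      rw [← ENNReal.ofReal_mul (hψ.pos _ (by positivity)).le, mul_assoc]; rfl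
  have hK : ENNReal.ofReal K ≠ 0 := by simp only [ne_eq, ofReal_eq_zero, not_le, K]; positivity
  rw [← ENNReal.mul_le_mul_iff_right hK ofReal_ne_top, ← hcost]
  calc ENNReal.ofReal K * ENNReal.ofReal (κ / 8 * ψ N) = N := by
        rw [← ENNReal.ofReal_mul (by positivity), ← ENNReal.ofReal_natCast]
        congr 1
        simp only [K]
        field_simp
        ring
    _ ≤ S.card := by exact_mod_cast hSN
    _ ≤ _ := hcount

lemma exists_pairwise_disjoint_subset_Icc_measure_eq {t : ℕ → ℝ} (ht : ∀ k, 0 ≤ t k)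
    (hsum : ∀ K, ∑ k ∈ Finset.range K, t k ≤ 1) :
    ∃ A : ℕ → Set ℝ, (∀ j, MeasurableSet (A j)) ∧ (∀ j, A j ⊆ Icc 0 1) ∧
      (∀ j, μ01 (A j) = ENNReal.ofReal (t j)) ∧ Pairwise (Function.onFun Disjoint A) := by
  set b : ℕ → ℝ := fun K => ∑ k ∈ Finset.range K, t k
  have hb : ∀ j, b (j + 1) = b j + t j := fun j => Finset.sum_range_succ t j
  have hmono : Monotone b := monotone_nat_of_le_succ fun j => by linarith [hb j, ht j]
  have hsub : ∀ j, Ico (b j) (b (j + 1)) ⊆ Icc 0 1 := fun j =>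
    Ico_subset_Icc_self.trans (Icc_subset_Icc (Finset.sum_nonneg fun k _ => ht k) (hsum _))
  refine ⟨fun j => Ico (b j) (b (j + 1)), fun j => measurableSet_Ico, hsub, fun j => ?_, ?_⟩
  · rw [μ01, Measure.restrict_apply' measurableSet_Icc, inter_eq_self_of_subset_left (hsub j),
      Real.volume_Ico, hb, add_sub_cancel_left]
  · simpa [Order.succ_eq_add_one] using hmono.pairwise_disjoint_on_Ico_succ

lemma le_sum_mul_indicator {ι : Type*} [Fintype ι] {a : ι → ℝ} (ha : ∀ i, 0 ≤ a i)
    {A : ι → Set ℝ} {j : ι} {x : ℝ} (hx : x ∈ A j) :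
    a j ≤ ∑ i, a i * (A i).indicator (fun _ => (1 : ℝ)) x := by
  calc a j = a j * (A j).indicator (fun _ => (1 : ℝ)) x := by simp [hx]
    _ ≤ ∑ i, a i * (A i).indicator (fun _ => (1 : ℝ)) x :=
        Finset.single_le_sum (fun i _ => mul_nonneg (ha i) (indicator_nonneg (by simp) x))
          (Finset.mem_univ j)

theorem stmt16_general {φ ψ : ℝ → ℝ} (hφ : IsPhi φ) (hψ : IsPsi ψ)
    (hφslope : Tendsto (fun t => φ t / t) (𝓝[>] 0) atTop)
    (c p : ℝ) (hc : 0 < c) (hc1 : c < 1) (hp : 0 < p)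
    (hreg : MonotoneOn (fun t => φ t / t ^ c) (Set.Ioc 0 p)) :
    ∀ N : ℕ, 2 ≤ N → ∃ A : Fin (2 * N) → Set ℝ,
      (∀ j, MeasurableSet (A j)) ∧ (∀ j, A j ⊆ Set.Icc (0:ℝ) 1) ∧
      (∀ j, 0 < μ01 (A j)) ∧
      (∀ i j, i ≠ j → Disjoint (A i) (A j)) ∧
      ENNReal.ofReal (((2:ℝ) ^ c - 1) / 8 * ψ (N : ℝ)) ≤
        QANorm φ ψ (fun x => ∑ j : Fin (2 * N),
          (1 / (2 * (N : ℝ) * φ ((μ01 (A j)).toReal))) *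
            (A j).indicator (fun _ => (1:ℝ)) x) := by
  intro N hN
  have hκ : 0 < (2 : ℝ) ^ c - 1 := by linarith [Real.one_lt_rpow one_lt_two hc]
  have hκ1 : (2 : ℝ) ^ c - 1 < 1 := by
    linarith [Real.rpow_lt_rpow_of_exponent_lt one_lt_two hc1, Real.rpow_one (2 : ℝ)]
  have hψN : 0 < ψ N := hψ.pos N (by positivity)
  -- the three constraints on `q` are what `sum_pow_scaleGap_le_mul_psi` needs
  set q := min (1 / 2) (min (1 - ((2 : ℝ) ^ c - 1)) (ψ 1 / (((2 : ℝ) ^ c - 1) * ψ N)))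
  have hq : 0 < q :=
    lt_min one_half_pos (lt_min (by linarith) (by have := hψ.pos 1 one_pos; positivity))
  have hqψ : q * (((2 : ℝ) ^ c - 1) * ψ N) ≤ ψ 1 :=
    (le_div_iff₀ (by positivity)).1 ((min_le_right _ _).trans (min_le_right _ _))
  obtain ⟨t, ht⟩ := exists_isLacunaryScales hφslope hc hp hq
  obtain ⟨A, hA, hA01, hAμ, hAdisj⟩ :=
    exists_pairwise_disjoint_subset_Icc_measure_eq (fun k => (ht.pos k).le) ht.sum_range_le_one
  refine ⟨fun j => A j, fun j => hA j, fun j => hA01 j,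
    fun j => by simpa [hAμ] using ht.pos j, fun i j hij => hAdisj (Fin.val_injective.ne hij), ?_⟩
  simp only [hAμ, ENNReal.toReal_ofReal (ht.pos _).le]
  refine le_iInf₂ fun g hg => ofReal_le_seqCost_of_isLacunaryScales hφ hψ hc hreg ht hq.le
    (min_le_left _ _) ((min_le_right _ _).trans (min_le_left _ _)) hκ (by omega) hqψ hA hAμ
    (fun j hj x hx => ?_) hg
  have hcoeff : ∀ i : Fin (2 * N), 0 ≤ 1 / (2 * (N : ℝ) * φ (t i)) := fun i => by
    have := hφ.pos _ (ht.pos i) (ht.le_one i)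
    positivity
  exact le_abs.2 (Or.inl (le_sum_mul_indicator (A := fun i : Fin (2 * N) => A i)
    (j := ⟨j, hj⟩) hcoeff hx))

/-- under assumptions (φ(0⁺)=0, φ(t)/t → ∞, `φ(t)/t^c` non-decreasing near 0,
`ψ(n²) ≤ C ψ(n)`), for every `N ≥ 2` there are pairwise disjoint measurable sets
`A₁,…,A_{2N} ⊆ [0,1]` of positive measure such that `f = ∑ⱼ aⱼ χ_{Aⱼ}` with
`aⱼ = 1/(2N φ(λ(Aⱼ)))` satisfies `‖f‖_{φ,ψ} ≥ (2^c - 1)/8 · ψ(N)`. -/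
theorem stmt16 {φ ψ : ℝ → ℝ} (hφ : IsPhi φ) (hψ : IsPsi ψ)
    (hφ0 : Tendsto φ (𝓝[>] 0) (𝓝 0))
    (hφslope : Tendsto (fun t => φ t / t) (𝓝[>] 0) atTop)
    (c p : ℝ) (hc : 0 < c) (hc1 : c < 1) (hp : 0 < p) (hp1 : p ≤ 1)
    (hreg : MonotoneOn (fun t => φ t / t ^ c) (Set.Ioc 0 p))
    (C : ℝ) (hC : 1 ≤ C) (hψC : ∀ n : ℕ, 1 ≤ n → ψ ((n : ℝ) ^ 2) ≤ C * ψ (n : ℝ)) :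
    ∀ N : ℕ, 2 ≤ N → ∃ A : Fin (2 * N) → Set ℝ,
      (∀ j, MeasurableSet (A j)) ∧ (∀ j, A j ⊆ Set.Icc (0:ℝ) 1) ∧
      (∀ j, 0 < μ01 (A j)) ∧
      (∀ i j, i ≠ j → Disjoint (A i) (A j)) ∧
      ENNReal.ofReal (((2:ℝ) ^ c - 1) / 8 * ψ (N : ℝ)) ≤
        QANorm φ ψ (fun x => ∑ j : Fin (2 * N),
          (1 / (2 * (N : ℝ) * φ ((μ01 (A j)).toReal))) *
            (A j).indicator (fun _ => (1:ℝ)) x) :=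
  stmt16_general hφ hψ hφslope c p hc hc1 hp hreg
end
end
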